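/- arXiv:math/0001095 — 9 statements merged into one kernel-verified Lean document; each statement's English description precedes it below -/
import Mathlib

section
/- Let k be a field and V, U finite-dimensional k-vector spaces with V ≠ 0, and let f : End(V) → End(U) be a unital homomorphism of k-algebras. Then there exist a finite-dimensional k-vector space W and a k-linear isomorphism φ : V ⊗ W → U such that f(x) = φ ∘ (x ⊗ id_W) ∘ φ⁻¹ for all x ∈ End(V). -/
/-!
Fix `v₀ ∈ V` and `ψ ∈ V*` with `ψ v₀ = 1`, so that `p = ψ(·) v₀` is a rank-one idempotent, and
let `W` be the image of `f p`. The map `v ⊗ w ↦ f (ψ(·) v) w` intertwines `x ⊗ id` with `f x`,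
because `x ∘ ψ(·) v = ψ(·) (x v)`. For a basis `(bᵢ)` with coordinate functionals `(bᵢ*)`, its
inverse is `u ↦ ∑ᵢ bᵢ ⊗ f (bᵢ*(·) v₀) u`: both composites reduce to the identity by the
multiplication rule `(g(·) v) ∘ (h(·) w) = g w • h(·) v` for rank-one operators and the
decomposition `1 = ∑ᵢ bᵢ*(·) bᵢ`.
-/

open TensorProduct

namespace LinearMap

variable {R V M : Type*} [CommSemiring R] [AddCommMonoid V] [Module R V] [AddCommMonoid M]
  [Module R M]

theorem comp_smulRight (x : V →ₗ[R] M) (g : Module.Dual R V) (v : V) :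
    x ∘ₗ g.smulRight v = g.smulRight (x v) := by
  ext; simp

theorem smulRight_comp_smulRight (g h : Module.Dual R V) (v : M) (w : V) :
    g.smulRight v ∘ₗ h.smulRight w = g w • h.smulRight v := by
  ext; simp [smul_smul, mul_comm]

end LinearMap

theorem Module.Basis.sum_smulRight_coord {R V ι : Type*} [CommSemiring R] [AddCommMonoid V]
    [Module R V] [Fintype ι] (b : Module.Basis ι R V) :
    ∑ i, (b.coord i).smulRight (b i) = LinearMap.id := by
  ext v; simp [LinearMap.sum_apply, b.sum_repr]

namespace AlgHom

variable {R V U : Type*} [CommSemiring R] [AddCommMonoid V] [Module R V] [AddCommMonoid U]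
  [Module R U]
  (f : Module.End R V →ₐ[R] Module.End R U) (ψ : Module.Dual R V) (v₀ : V)

def multiplicitySpace : Submodule R U := LinearMap.range (f (ψ.smulRight v₀))

def tensorMultiplicity : V ⊗[R] f.multiplicitySpace ψ v₀ →ₗ[R] U :=
  TensorProduct.lift <| (LinearMap.lcomp R U (f.multiplicitySpace ψ v₀).subtype) ∘ₗ
    f.toLinearMap ∘ₗ LinearMap.smulRightₗ ψ

@[simp]
theorem tensorMultiplicity_tmul (v : V) (w : f.multiplicitySpace ψ v₀) :
    f.tensorMultiplicity ψ v₀ (v ⊗ₜ w) = f (ψ.smulRight v) w := rfl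

theorem comp_tensorMultiplicity (x : Module.End R V) :
    f x ∘ₗ f.tensorMultiplicity ψ v₀ = f.tensorMultiplicity ψ v₀ ∘ₗ x.rTensor _ := by
  ext v w
  simp [← Module.End.mul_apply, ← map_mul, Module.End.mul_eq_comp, LinearMap.comp_smulRight]

theorem smulRight_apply_smulRight (g h : Module.Dual R V) (v w : V) (u : U) :
    f (g.smulRight v) (f (h.smulRight w) u) = g w • f (h.smulRight v) u := by
  rw [← Module.End.mul_apply, ← map_mul, Module.End.mul_eq_comp,
    LinearMap.smulRight_comp_smulRight, map_smul, LinearMap.smul_apply]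

variable {f ψ v₀} (hψ : ψ v₀ = 1)
include hψ

theorem apply_smulRight_mem_multiplicitySpace (h : Module.Dual R V) (u : U) :
    f (h.smulRight v₀) u ∈ f.multiplicitySpace ψ v₀ :=
  ⟨f (h.smulRight v₀) u, by rw [smulRight_apply_smulRight, hψ, one_smul]⟩

theorem apply_multiplicitySpace (w : f.multiplicitySpace ψ v₀) :
    f (ψ.smulRight v₀) w = w := by
  obtain ⟨_, u, rfl⟩ := w
  rw [smulRight_apply_smulRight, hψ, one_smul]

variable {ι : Type*} [Fintype ι] (b : Module.Basis ι R V)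

noncomputable def tensorMultiplicityInv : U →ₗ[R] V ⊗[R] f.multiplicitySpace ψ v₀ :=
  ∑ i, TensorProduct.mk R V _ (b i) ∘ₗ
    (f ((b.coord i).smulRight v₀)).codRestrict _ (apply_smulRight_mem_multiplicitySpace hψ _)

theorem tensorMultiplicity_comp_inv :
    f.tensorMultiplicity ψ v₀ ∘ₗ tensorMultiplicityInv hψ b = LinearMap.id := by
  ext u
  calc f.tensorMultiplicity ψ v₀ (tensorMultiplicityInv hψ b u)
      = ∑ i, f ((b.coord i).smulRight (b i)) u := by
        simp [tensorMultiplicityInv, LinearMap.sum_apply, smulRight_apply_smulRight, hψ]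
    _ = u := by
        rw [← LinearMap.sum_apply, ← map_sum, b.sum_smulRight_coord, ← Module.End.one_eq_id,
          map_one, Module.End.one_apply]

theorem inv_comp_tensorMultiplicity :
    tensorMultiplicityInv hψ b ∘ₗ f.tensorMultiplicity ψ v₀ = LinearMap.id := by
  refine TensorProduct.ext' fun v w => ?_
  calc tensorMultiplicityInv hψ b (f.tensorMultiplicity ψ v₀ (v ⊗ₜ w))
      = ∑ i, b i ⊗ₜ (b.coord i v • w) := by
        simp only [tensorMultiplicityInv, LinearMap.sum_apply, LinearMap.comp_apply, mk_apply]
        refine Finset.sum_congr rfl fun i _ => congrArg _ (Subtype.ext ?_)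
        simp [smulRight_apply_smulRight, apply_multiplicitySpace hψ]
    _ = (∑ i, b.repr v i • b i) ⊗ₜ w := by
        simp only [sum_tmul, smul_tmul, Module.Basis.coord_apply]
    _ = v ⊗ₜ w := by rw [b.sum_repr]

noncomputable def tensorMultiplicityEquiv : V ⊗[R] f.multiplicitySpace ψ v₀ ≃ₗ[R] U :=
  .ofLinearMap (f := f.tensorMultiplicity ψ v₀) (g := tensorMultiplicityInv hψ b)
    (tensorMultiplicity_comp_inv hψ b) (inv_comp_tensorMultiplicity hψ b)

@[simp]
theorem tensorMultiplicityEquiv_toLinearMap :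
    (tensorMultiplicityEquiv hψ b).toLinearMap = f.tensorMultiplicity ψ v₀ := rfl

end AlgHom

/-- Any unital `k`-algebra homomorphism `End(V) → End(U)` between endomorphism
algebras of finite-dimensional vector spaces (with `V ≠ 0`) is, up to a linear isomorphism
`V ⊗ W ≃ U` for some finite-dimensional `W`, the standard inclusion `x ↦ x ⊗ id_W`. -/
theorem stmt0 {k V U : Type} [Field k]
    [AddCommGroup V] [Module k V] [FiniteDimensional k V] [Nontrivial V]
    [AddCommGroup U] [Module k U] [FiniteDimensional k U]
    (f : Module.End k V →ₐ[k] Module.End k U) :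
    ∃ (W : Type) (_ : AddCommGroup W) (_ : Module k W),
      FiniteDimensional k W ∧
      ∃ φ : V ⊗[k] W ≃ₗ[k] U,
        ∀ x : Module.End k V,
          f x = φ.toLinearMap ∘ₗ x.rTensor W ∘ₗ φ.symm.toLinearMap := by
  let b := Module.finBasis k V
  obtain ⟨i⟩ := b.index_nonempty
  have hψ : b.coord i (b i) = 1 := by simp
  refine ⟨f.multiplicitySpace (b.coord i) (b i), inferInstance, inferInstance, inferInstance,
    AlgHom.tensorMultiplicityEquiv hψ b, fun x => ?_⟩
  rw [← LinearMap.comp_assoc, LinearEquiv.eq_comp_toLinearMap_symm,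
    AlgHom.tensorMultiplicityEquiv_toLinearMap, AlgHom.comp_tensorMultiplicity]
end

section
/- Let k be a field, V and M finite-dimensional k-vector spaces with V ≠ 0, and F : V ⊗ M → V ⊗ V a k-linear isomorphism. Then the following are equivalent: (i) for every x ∈ End(V), F_{12} ∘ F_{13} ∘ (x ⊗ id_M ⊗ id_M) ∘ F_{13}⁻¹ ∘ F_{12}⁻¹ = F_{23} ∘ F_{12} ∘ (x ⊗ id_M ⊗ id_M) ∘ F_{12}⁻¹ ∘ F_{23}⁻¹ as endomorphisms of V ⊗ V ⊗ V (i.e. the comultiplication Δ_F(x) = F ∘ (x ⊗ id_M) ∘ F⁻¹ is coassociative); (ii) there exists a k-linear automorphism Φ of M ⊗ M such that (F, Φ) satisfies the modified pentagon equation. -/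
/-!
Write `A = F₁₂ F₁₃` and `B = F₂₃ F₁₂`, both isomorphisms `V ⊗ M ⊗ M → V ⊗ V ⊗ V`. Condition (i)
says `A (x ⊗ 1) A⁻¹ = B (x ⊗ 1) B⁻¹` for all `x`, i.e. `A⁻¹ B` commutes with `End V ⊗ 1`, while
the modified pentagon equation says `A⁻¹ B = 1 ⊗ Φ`. The two agree because the commutant of
`End V ⊗ 1` in `End (V ⊗ W)` is `1 ⊗ End W`, as one sees by testing against the rank-one maps
`u ↦ φ(u) v` with `φ(v₀) = 1`.
-/

open TensorProduct

noncomputable section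

variable {k : Type*} [Field k]

/-- Apply `G` to tensor factors 1 and 2 of a triple tensor product. -/
def m12 {A B C P Q : Type*}
    [AddCommGroup A] [AddCommGroup B] [AddCommGroup C] [AddCommGroup P] [AddCommGroup Q]
    [Module k A] [Module k B] [Module k C] [Module k P] [Module k Q]
    (G : A ⊗[k] B →ₗ[k] P ⊗[k] Q) :
    A ⊗[k] (B ⊗[k] C) →ₗ[k] P ⊗[k] (Q ⊗[k] C) :=
  (TensorProduct.assoc k P Q C).toLinearMap ∘ₗ G.rTensor C ∘ₗ
    (TensorProduct.assoc k A B C).symm.toLinearMap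

/-- Apply `G` to tensor factors 2 and 3 of a triple tensor product. -/
def m23 {A B C Q R : Type*}
    [AddCommGroup A] [AddCommGroup B] [AddCommGroup C] [AddCommGroup Q] [AddCommGroup R]
    [Module k A] [Module k B] [Module k C] [Module k Q] [Module k R]
    (G : B ⊗[k] C →ₗ[k] Q ⊗[k] R) :
    A ⊗[k] (B ⊗[k] C) →ₗ[k] A ⊗[k] (Q ⊗[k] R) :=
  G.lTensor A

/-- Apply `G` to tensor factors 1 and 3 of a triple tensor product. -/
def m13 {A B C P R : Type*}
    [AddCommGroup A] [AddCommGroup B] [AddCommGroup C] [AddCommGroup P] [AddCommGroup R]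
    [Module k A] [Module k B] [Module k C] [Module k P] [Module k R]
    (G : A ⊗[k] C →ₗ[k] P ⊗[k] R) :
    A ⊗[k] (B ⊗[k] C) →ₗ[k] P ⊗[k] (B ⊗[k] R) :=
  ((TensorProduct.comm k R B).toLinearMap.lTensor P) ∘ₗ
    (TensorProduct.assoc k P R B).toLinearMap ∘ₗ G.rTensor B ∘ₗ
    (TensorProduct.assoc k A C B).symm.toLinearMap ∘ₗ
    ((TensorProduct.comm k B C).toLinearMap.lTensor A)

/-- The modified pentagon equation for a pair `(F, Φ)`. -/
def MPE {V M : Type*} [AddCommGroup V] [AddCommGroup M] [Module k V] [Module k M]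
    (F : V ⊗[k] M →ₗ[k] V ⊗[k] V) (Φ : M ⊗[k] M →ₗ[k] M ⊗[k] M) : Prop :=
  m12 F ∘ₗ m13 F ∘ₗ m23 Φ = m23 F ∘ₗ m12 F

section Commutant

variable {R V W Y : Type*} [CommRing R] [AddCommGroup V] [Module R V] [AddCommGroup W]
  [Module R W] [AddCommGroup Y] [Module R Y]

theorem LinearMap.lTensor_inj [Module.FaithfullyFlat R V] {ψ ψ' : W →ₗ[R] Y} :
    ψ.lTensor V = ψ'.lTensor V ↔ ψ = ψ' := by
  rw [← sub_eq_zero, ← LinearMap.lTensor_sub, ← Module.FaithfullyFlat.zero_iff_lTensor_zero,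
    sub_eq_zero]

variable [Module.Free R V] [Nontrivial V]

theorem LinearMap.exists_eq_lTensor_of_commute_rTensor (S : Module.End R (V ⊗[R] W))
    (hS : ∀ x : Module.End R V, Commute S (x.rTensor W)) :
    ∃ ψ : Module.End R W, S = ψ.lTensor V := by
  let b := Module.Free.chooseBasis R V
  obtain ⟨i⟩ := b.index_nonempty
  -- `π` evaluates the first factor at the coordinate `b.coord i`, which is `1` on `b i`.
  let π : V ⊗[R] W →ₗ[R] W := (TensorProduct.lid R W).toLinearMap ∘ₗ (b.coord i).rTensor W
  refine ⟨π ∘ₗ S ∘ₗ TensorProduct.mk R V W (b i), TensorProduct.ext' fun v w => ?_⟩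
  -- The rank-one map `u ↦ (b.coord i u) • v` moves `b i ⊗ w` to `v ⊗ w` and commutes with `S`.
  let x : Module.End R V := (b.coord i).smulRight v
  have hx : ∀ t, x.rTensor W t = v ⊗ₜ π t := fun t => by
    induction t using TensorProduct.induction_on with
    | zero => simp
    | tmul u w' => simp [x, π, TensorProduct.smul_tmul]
    | add t t' ht ht' => simp only [map_add, ht, ht', TensorProduct.tmul_add]
  calc S (v ⊗ₜ w) = S (x.rTensor W (b i ⊗ₜ w)) := by simp [x]
    _ = x.rTensor W (S (b i ⊗ₜ w)) := LinearMap.congr_fun (hS x) _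
    _ = _ := by rw [hx]; rfl

theorem LinearEquiv.exists_eq_lTensor_of_commute_rTensor (S : V ⊗[R] W ≃ₗ[R] V ⊗[R] W)
    (hS : ∀ x : Module.End R V, Commute S.toLinearMap (x.rTensor W)) :
    ∃ Ψ : W ≃ₗ[R] W, S = LinearEquiv.lTensor V Ψ := by
  have hS' : ∀ x : Module.End R V, Commute S.symm.toLinearMap (x.rTensor W) := fun x =>
    LinearMap.ext fun t => S.injective <| by
      simpa using (LinearMap.congr_fun (hS x) (S.symm t)).symm
  obtain ⟨ψ, hψ⟩ := LinearMap.exists_eq_lTensor_of_commute_rTensor _ hS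
  obtain ⟨ψ', hψ'⟩ := LinearMap.exists_eq_lTensor_of_commute_rTensor _ hS'
  have h₁ : ψ ∘ₗ ψ' = LinearMap.id := by
    rw [← LinearMap.lTensor_inj (V := V), LinearMap.lTensor_comp, ← hψ, ← hψ',
      LinearMap.lTensor_id, LinearEquiv.comp_symm]
  have h₂ : ψ' ∘ₗ ψ = LinearMap.id := by
    rw [← LinearMap.lTensor_inj (V := V), LinearMap.lTensor_comp, ← hψ, ← hψ',
      LinearMap.lTensor_id, LinearEquiv.symm_comp]
  exact ⟨LinearEquiv.ofLinearMap ψ ψ' h₁ h₂, LinearEquiv.toLinearMap_injective hψ⟩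

theorem LinearEquiv.forall_conj_rTensor_eq_iff_exists_comp_lTensor (A B : V ⊗[R] W ≃ₗ[R] Y) :
    (∀ x : Module.End R V, A.toLinearMap ∘ₗ x.rTensor W ∘ₗ A.symm.toLinearMap =
        B.toLinearMap ∘ₗ x.rTensor W ∘ₗ B.symm.toLinearMap) ↔
      ∃ Φ : W ≃ₗ[R] W, A.toLinearMap ∘ₗ Φ.toLinearMap.lTensor V = B.toLinearMap := by
  constructor
  · intro h
    obtain ⟨Φ, hΦ⟩ := exists_eq_lTensor_of_commute_rTensor (B.trans A.symm) fun x =>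
      LinearMap.ext fun t => A.injective <| by
        simpa using (LinearMap.congr_fun (h x) (B t)).symm
    refine ⟨Φ, LinearMap.ext fun t => ?_⟩
    rw [LinearMap.comp_apply, ← LinearEquiv.coe_lTensor, LinearEquiv.coe_coe, ← hΦ]
    simp
  · rintro ⟨Φ, hΦ⟩ x
    obtain rfl : B = (LinearEquiv.lTensor V Φ).trans A := LinearEquiv.toLinearMap_injective hΦ.symm
    have hx : ∀ s, LinearEquiv.lTensor V Φ (x.rTensor W (LinearEquiv.lTensor V Φ.symm s)) =
        x.rTensor W s := fun s => by
      rw [← LinearEquiv.coe_coe, ← LinearMap.comp_apply, LinearEquiv.coe_lTensor,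
        LinearMap.lTensor_comp_rTensor, ← LinearMap.rTensor_comp_lTensor, LinearMap.comp_apply,
        ← LinearEquiv.coe_lTensor, LinearEquiv.coe_coe, ← LinearEquiv.symm_lTensor,
        LinearEquiv.apply_symm_apply]
    ext t
    simp [hx]

end Commutant

section Legs

variable {A B C P Q R : Type*} [AddCommGroup A] [AddCommGroup B] [AddCommGroup C]
  [AddCommGroup P] [AddCommGroup Q] [AddCommGroup R] [Module k A] [Module k B] [Module k C]
  [Module k P] [Module k Q] [Module k R]

def m12Equiv (G : A ⊗[k] B ≃ₗ[k] P ⊗[k] Q) : A ⊗[k] (B ⊗[k] C) ≃ₗ[k] P ⊗[k] (Q ⊗[k] C) :=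
  (TensorProduct.assoc k A B C).symm ≪≫ₗ LinearEquiv.rTensor C G ≪≫ₗ TensorProduct.assoc k P Q C

def m13Equiv (G : A ⊗[k] C ≃ₗ[k] P ⊗[k] R) : A ⊗[k] (B ⊗[k] C) ≃ₗ[k] P ⊗[k] (B ⊗[k] R) :=
  LinearEquiv.lTensor A (TensorProduct.comm k B C) ≪≫ₗ (TensorProduct.assoc k A C B).symm ≪≫ₗ
    LinearEquiv.rTensor B G ≪≫ₗ TensorProduct.assoc k P R B ≪≫ₗ
    LinearEquiv.lTensor P (TensorProduct.comm k R B)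

end Legs

theorem stmt2_general {V M : Type}
    [AddCommGroup V] [Module k V] [Nontrivial V]
    [AddCommGroup M] [Module k M]
    (F : V ⊗[k] M ≃ₗ[k] V ⊗[k] V) :
    (∀ x : Module.End k V,
        m12 F.toLinearMap ∘ₗ m13 F.toLinearMap ∘ₗ x.rTensor (M ⊗[k] M) ∘ₗ
            m13 F.symm.toLinearMap ∘ₗ m12 F.symm.toLinearMap =
          m23 F.toLinearMap ∘ₗ m12 F.toLinearMap ∘ₗ x.rTensor (M ⊗[k] M) ∘ₗ
            m12 F.symm.toLinearMap ∘ₗ m23 F.symm.toLinearMap) ↔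
      ∃ Φ : M ⊗[k] M ≃ₗ[k] M ⊗[k] M, MPE F.toLinearMap Φ.toLinearMap :=
  -- These composites of equivalences unfold definitionally to `m12`, `m13`, `m23` and inverses.
  LinearEquiv.forall_conj_rTensor_eq_iff_exists_comp_lTensor
    (m13Equiv F ≪≫ₗ m12Equiv F) (m12Equiv F ≪≫ₗ LinearEquiv.lTensor V F)

/-- For a linear isomorphism `F : V ⊗ M → V ⊗ V`, the comultiplication
`Δ_F(x) = F ∘ (x ⊗ id_M) ∘ F⁻¹` is coassociative iff there is an automorphism `Φ` of `M ⊗ M`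
such that `(F, Φ)` satisfies the modified pentagon equation. -/
theorem stmt2 {V M : Type}
    [AddCommGroup V] [Module k V] [FiniteDimensional k V] [Nontrivial V]
    [AddCommGroup M] [Module k M] [FiniteDimensional k M]
    (F : V ⊗[k] M ≃ₗ[k] V ⊗[k] V) :
    (∀ x : Module.End k V,
        m12 F.toLinearMap ∘ₗ m13 F.toLinearMap ∘ₗ x.rTensor (M ⊗[k] M) ∘ₗ
            m13 F.symm.toLinearMap ∘ₗ m12 F.symm.toLinearMap =
          m23 F.toLinearMap ∘ₗ m12 F.toLinearMap ∘ₗ x.rTensor (M ⊗[k] M) ∘ₗ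
            m12 F.symm.toLinearMap ∘ₗ m23 F.symm.toLinearMap) ↔
      ∃ Φ : M ⊗[k] M ≃ₗ[k] M ⊗[k] M, MPE F.toLinearMap Φ.toLinearMap :=
  stmt2_general F
end
end

section
/- Let k be a field, V, M, M' nonzero finite-dimensional k-vector spaces, and let F : V ⊗ M → V ⊗ V and F' : V ⊗ M' → V ⊗ V be k-linear isomorphisms such that (F, Φ) and (F', Φ') satisfy the modified pentagon equation for some automorphisms Φ of M ⊗ M and Φ' of M' ⊗ M'. Then there exists a k-algebra automorphism θ of End(V) with Δ_{F'}(θ(x)) = (θ ⊗ θ)(Δ_F(x)) for all x ∈ End(V) (θ ⊗ θ acting on End(V ⊗ V) via the identification End(V ⊗ V) ≅ End(V) ⊗ End(V)) if and only if there exist k-linear isomorphisms f : V → V and g : M → M' with (f ⊗ f) ∘ F = F' ∘ (f ⊗ g). -/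
open TensorProduct

noncomputable section

variable {k : Type*} [Field k]

/-- The pentagon equation: `Φ₁₂ ∘ Φ₁₃ ∘ Φ₂₃ = Φ₂₃ ∘ Φ₁₂` on `M ⊗ M ⊗ M`. -/
def PE {M : Type*} [AddCommGroup M] [Module k M]
    (Φ : M ⊗[k] M →ₗ[k] M ⊗[k] M) : Prop :=
  m12 Φ ∘ₗ m13 Φ ∘ₗ m23 Φ = m23 Φ ∘ₗ m12 Φ

section Aux

variable {V : Type} [AddCommGroup V] [Module k V]

lemma exists_dual_one (v : V) (hv : v ≠ 0) : ∃ φ : Module.Dual k V, φ v = 1 := by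
  have h : ¬ ∀ φ : Module.Dual k V, φ v = 0 := by
    rw [Module.forall_dual_apply_eq_zero_iff]; exact hv
  push_neg at h
  obtain ⟨φ, hφ⟩ := h
  exact ⟨(φ v)⁻¹ • φ, by simp [inv_mul_cancel₀ hφ]⟩

lemma tmul_eq_zero' {M : Type} [AddCommGroup M] [Module k M] {v : V} (hv : v ≠ 0)
    {m : M} (h : v ⊗ₜ[k] m = 0) : m = 0 := by
  obtain ⟨φ, hφ⟩ := exists_dual_one (k := k) v hv
  have := congrArg (fun t => (TensorProduct.lid k M) (LinearMap.rTensor M φ t)) h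
  simpa [hφ] using this

lemma map_map_symm {A B P Q : Type} [AddCommGroup A] [Module k A] [AddCommGroup B] [Module k B]
    [AddCommGroup P] [Module k P] [AddCommGroup Q] [Module k Q]
    (f : A ≃ₗ[k] P) (g : B ≃ₗ[k] Q) (t : A ⊗[k] B) :
    TensorProduct.map f.symm.toLinearMap g.symm.toLinearMap
      (TensorProduct.map f.toLinearMap g.toLinearMap t) = t := by
  induction t using TensorProduct.induction_on with
  | zero => simp
  | tmul a b => simp
  | add x y hx hy => simp [map_add, hx, hy]

lemma skolem_noether [FiniteDimensional k V] [Nontrivial V]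
    (θ : Module.End k V ≃ₐ[k] Module.End k V) :
    ∃ f : V ≃ₗ[k] V, ∀ x : Module.End k V,
      θ x = f.toLinearMap ∘ₗ x ∘ₗ f.symm.toLinearMap := by
  obtain ⟨v₀, hv₀⟩ := exists_ne (0 : V)
  obtain ⟨φ, hφ⟩ := exists_dual_one (k := k) v₀ hv₀
  have hee : φ.smulRight v₀ * φ.smulRight v₀ = φ.smulRight v₀ := by
    ext u; simp [Module.End.mul_apply, hφ, smul_smul]
  have hev : φ.smulRight v₀ v₀ = v₀ := by simp [hφ]
  have he0 : φ.smulRight v₀ ≠ 0 := by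
    intro h
    exact hv₀ (by rw [← hev, h]; rfl)
  have hθe : θ (φ.smulRight v₀) ≠ 0 := fun h => he0 (θ.injective (by rw [h, map_zero]))
  obtain ⟨u, hu⟩ : ∃ u, θ (φ.smulRight v₀) u ≠ 0 := by
    by_contra h; push_neg at h
    exact hθe (LinearMap.ext fun u => by simp [h u])
  have h2 : θ (φ.smulRight v₀) * θ (φ.smulRight v₀) = θ (φ.smulRight v₀) := by
    rw [← map_mul, hee]
  have hw : θ (φ.smulRight v₀) (θ (φ.smulRight v₀) u) = θ (φ.smulRight v₀) u := by
    simpa [Module.End.mul_apply] using congrArg (fun z : Module.End k V => z u) h2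
  set w₀ := θ (φ.smulRight v₀) u with hw₀
  set f₀ : V →ₗ[k] V :=
    { toFun := fun v => θ (φ.smulRight v) w₀
      map_add' := fun a b => by
        show θ (φ.smulRight (a + b)) w₀ = θ (φ.smulRight a) w₀ + θ (φ.smulRight b) w₀
        rw [show φ.smulRight (a + b) = φ.smulRight a + φ.smulRight b from
          LinearMap.ext fun u => by simp [smul_add], map_add]
        simp
      map_smul' := fun c a => by
        show θ (φ.smulRight (c • a)) w₀ = (RingHom.id k) c • θ (φ.smulRight a) w₀
        rw [show φ.smulRight (c • a) = c • φ.smulRight a from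
          LinearMap.ext fun u => by simp only [LinearMap.smulRight_apply, LinearMap.smul_apply]; rw [smul_comm], map_smul]
        simp only [LinearMap.smul_apply, RingHom.id_apply] } with hf₀def
  have hequiv : ∀ (x : Module.End k V) (v : V), f₀ (x v) = θ x (f₀ v) := by
    intro x v
    have hx : φ.smulRight (x v) = x * φ.smulRight v :=
      LinearMap.ext fun u => by simp [Module.End.mul_apply, map_smul]
    show θ (φ.smulRight (x v)) w₀ = θ x (θ (φ.smulRight v) w₀)
    rw [hx, map_mul]; rfl
  have hfv₀ : f₀ v₀ = w₀ := hw
  have hinj : Function.Injective f₀ := by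
    rw [← LinearMap.ker_eq_bot, LinearMap.ker_eq_bot']
    intro m hm
    by_contra hm0
    obtain ⟨ψ, hψ⟩ := exists_dual_one (k := k) m hm0
    have h3 : f₀ (ψ.smulRight v₀ m) = θ (ψ.smulRight v₀) (f₀ m) := hequiv _ _
    rw [hm, map_zero] at h3
    have h4 : (ψ.smulRight v₀) m = v₀ := by simp [hψ]
    rw [h4, hfv₀] at h3
    exact hu h3
  have hbij : Function.Bijective f₀ := ⟨hinj, LinearMap.injective_iff_surjective.mp hinj⟩
  refine ⟨LinearEquiv.ofBijective f₀ hbij, fun x => ?_⟩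
  ext v
  simp only [LinearMap.comp_apply, LinearEquiv.coe_coe]
  have h1 : (LinearEquiv.ofBijective f₀ hbij) ((LinearEquiv.ofBijective f₀ hbij).symm v) = v :=
    LinearEquiv.apply_symm_apply _ _
  conv_lhs => rw [← h1]
  rw [LinearEquiv.ofBijective_apply, ← hequiv, LinearEquiv.ofBijective_apply]

lemma equivariant_eq_lTensor [Nontrivial V] {M M' : Type}
    [AddCommGroup M] [Module k M] [AddCommGroup M'] [Module k M']
    (H : V ⊗[k] M' →ₗ[k] V ⊗[k] M)
    (hH : ∀ (x : Module.End k V) (t : V ⊗[k] M'),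
      LinearMap.rTensor M x (H t) = H (LinearMap.rTensor M' x t)) :
    ∃ g : M' →ₗ[k] M, H = LinearMap.lTensor V g := by
  obtain ⟨v₀, hv₀⟩ := exists_ne (0 : V)
  obtain ⟨φ, hφ⟩ := exists_dual_one (k := k) v₀ hv₀
  refine ⟨(TensorProduct.lid k M).toLinearMap ∘ₗ LinearMap.rTensor M φ ∘ₗ H ∘ₗ
      TensorProduct.mk k V M' v₀, ?_⟩
  apply TensorProduct.ext'
  intro v m
  have hx : (φ.smulRight v) v₀ = v := by simp [hφ]
  have h1 : H (v ⊗ₜ m) = LinearMap.rTensor M (φ.smulRight v) (H (v₀ ⊗ₜ m)) := by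
    rw [hH, LinearMap.rTensor_tmul, hx]
  have h2 : ∀ t : V ⊗[k] M, LinearMap.rTensor M (φ.smulRight v) t
      = v ⊗ₜ (TensorProduct.lid k M (LinearMap.rTensor M φ t)) := by
    intro t
    induction t using TensorProduct.induction_on with
    | zero => simp
    | tmul w n =>
      simp [TensorProduct.smul_tmul', TensorProduct.tmul_smul]
    | add a b ha hb => simp [tmul_add, ha, hb]
  rw [h1, h2]
  simp [LinearMap.lTensor_tmul]

lemma conj_hth [FiniteDimensional k V] (f : V ≃ₗ[k] V)
    (θ : Module.End k V ≃ₐ[k] Module.End k V)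
    (hθf : ∀ x : Module.End k V, θ x = f.toLinearMap ∘ₗ x ∘ₗ f.symm.toLinearMap)
    (G : V ⊗[k] V →ₗ[k] V ⊗[k] V) :
    homTensorHomEquiv k V V V V
      (TensorProduct.map θ.toLinearMap θ.toLinearMap
        ((homTensorHomEquiv k V V V V).symm G)) =
    TensorProduct.map f.toLinearMap f.toLinearMap ∘ₗ G ∘ₗ
      TensorProduct.map f.symm.toLinearMap f.symm.toLinearMap := by
  have key : ∀ t : (Module.End k V) ⊗[k] (Module.End k V),
      homTensorHomEquiv k V V V V (TensorProduct.map θ.toLinearMap θ.toLinearMap t) =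
        TensorProduct.map f.toLinearMap f.toLinearMap ∘ₗ (homTensorHomEquiv k V V V V t) ∘ₗ
          TensorProduct.map f.symm.toLinearMap f.symm.toLinearMap := by
    intro t
    induction t using TensorProduct.induction_on with
    | zero => simp
    | tmul a b =>
      simp only [TensorProduct.map_tmul, homTensorHomEquiv_apply, homTensorHomMap_apply,
        AlgEquiv.toLinearMap_apply, hθf]
      rw [← TensorProduct.map_comp, ← TensorProduct.map_comp]
    | add a b ha hb =>
      simp only [map_add, ha, hb, LinearMap.add_comp, LinearMap.comp_add]
  rw [key, LinearEquiv.apply_symm_apply]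

end Aux

/-- Two solutions `(F, Φ)`, `(F', Φ')` of the modified pentagon equation on
`(V, M)`, `(V, M')` give isomorphic bialgebras `(End(V), Δ_F)`, `(End(V), Δ_{F'})` — i.e. there
is an algebra automorphism `θ` of `End(V)` with `Δ_{F'} ∘ θ = (θ ⊗ θ) ∘ Δ_F` — iff there exist
isomorphisms `f : V → V`, `g : M → M'` with `(f ⊗ f) ∘ F = F' ∘ (f ⊗ g)`. -/
theorem stmt4 {V M M' : Type}
    [AddCommGroup V] [Module k V] [FiniteDimensional k V] [Nontrivial V]
    [AddCommGroup M] [Module k M] [FiniteDimensional k M] [Nontrivial M]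
    [AddCommGroup M'] [Module k M'] [FiniteDimensional k M'] [Nontrivial M']
    (F : V ⊗[k] M ≃ₗ[k] V ⊗[k] V) (Φ : M ⊗[k] M ≃ₗ[k] M ⊗[k] M)
    (F' : V ⊗[k] M' ≃ₗ[k] V ⊗[k] V) (Φ' : M' ⊗[k] M' ≃ₗ[k] M' ⊗[k] M')
    (hFΦ : MPE F.toLinearMap Φ.toLinearMap) (hF'Φ' : MPE F'.toLinearMap Φ'.toLinearMap) :
    (∃ θ : Module.End k V ≃ₐ[k] Module.End k V,
      ∀ x : Module.End k V,
        F'.toLinearMap ∘ₗ (θ x).rTensor M' ∘ₗ F'.symm.toLinearMap =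
          homTensorHomEquiv k V V V V
            (TensorProduct.map θ.toLinearMap θ.toLinearMap
              ((homTensorHomEquiv k V V V V).symm
                (F.toLinearMap ∘ₗ x.rTensor M ∘ₗ F.symm.toLinearMap)))) ↔
    ∃ (f : V ≃ₗ[k] V) (g : M ≃ₗ[k] M'),
      TensorProduct.map f.toLinearMap f.toLinearMap ∘ₗ F.toLinearMap =
        F'.toLinearMap ∘ₗ TensorProduct.map f.toLinearMap g.toLinearMap := by
  constructor
  · rintro ⟨θ, hθ⟩
    obtain ⟨f, hf⟩ := skolem_noether θ
    have hθ' : ∀ x : Module.End k V,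
        F'.toLinearMap ∘ₗ
            (f.toLinearMap ∘ₗ x ∘ₗ f.symm.toLinearMap).rTensor M' ∘ₗ F'.symm.toLinearMap =
          TensorProduct.map f.toLinearMap f.toLinearMap ∘ₗ
            (F.toLinearMap ∘ₗ x.rTensor M ∘ₗ F.symm.toLinearMap) ∘ₗ
            TensorProduct.map f.symm.toLinearMap f.symm.toLinearMap := by
      intro x
      have h := hθ x
      rwa [conj_hth f θ hf, hf x] at h
    -- the intertwiner H : V ⊗ M' ≃ V ⊗ M
    set Heq : V ⊗[k] M' ≃ₗ[k] V ⊗[k] M :=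
      (TensorProduct.congr f (LinearEquiv.refl k M')).trans
        (F'.trans ((TensorProduct.congr f.symm f.symm).trans F.symm)) with hHeqdef
    have hHt : ∀ t : V ⊗[k] M', Heq t =
        F.symm (TensorProduct.map f.symm.toLinearMap f.symm.toLinearMap
          (F' (TensorProduct.map f.toLinearMap LinearMap.id t))) := by
      intro t
      have hc1 : (TensorProduct.congr f (LinearEquiv.refl k M')) t =
          TensorProduct.map f.toLinearMap LinearMap.id t := rfl
      have hc2 : ∀ s : V ⊗[k] V, (TensorProduct.congr f.symm f.symm) s =
          TensorProduct.map f.symm.toLinearMap f.symm.toLinearMap s := fun s => rfl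
      simp only [hHeqdef, LinearEquiv.trans_apply, hc1, hc2]
    have hHequiv : ∀ (x : Module.End k V) (t : V ⊗[k] M'),
        LinearMap.rTensor M x (Heq t) = Heq (LinearMap.rTensor M' x t) := by
      intro x t
      have h := LinearMap.congr_fun (hθ' x)
        (F' (TensorProduct.map f.toLinearMap LinearMap.id t))
      simp only [LinearMap.comp_apply, LinearEquiv.coe_coe, LinearEquiv.symm_apply_apply] at h
      have h2 := congrArg (fun z => F.symm
        (TensorProduct.map f.symm.toLinearMap f.symm.toLinearMap z)) h
      simp only [map_map_symm, LinearEquiv.symm_apply_apply] at h2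
      have h3 : (f.toLinearMap ∘ₗ x ∘ₗ f.symm.toLinearMap).rTensor M'
          (TensorProduct.map f.toLinearMap LinearMap.id t) =
          TensorProduct.map f.toLinearMap LinearMap.id (LinearMap.rTensor M' x t) := by
        have : (f.toLinearMap ∘ₗ x ∘ₗ f.symm.toLinearMap).rTensor M' ∘ₗ
            TensorProduct.map f.toLinearMap LinearMap.id =
            TensorProduct.map f.toLinearMap LinearMap.id ∘ₗ LinearMap.rTensor M' x := by
          apply TensorProduct.ext'
          intro v m
          simp [LinearEquiv.symm_apply_apply]
        exact LinearMap.congr_fun this t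
      rw [h3] at h2
      rw [hHt, hHt, ← h2]
    obtain ⟨g₀, hg₀⟩ := equivariant_eq_lTensor Heq.toLinearMap hHequiv
    obtain ⟨v₀, hv₀⟩ := exists_ne (0 : V)
    have hg₀inj : Function.Injective g₀ := by
      rw [← LinearMap.ker_eq_bot, LinearMap.ker_eq_bot']
      intro m hm
      have hz : Heq (v₀ ⊗ₜ m) = 0 := by
        have := LinearMap.congr_fun hg₀ (v₀ ⊗ₜ m)
        simp only [LinearEquiv.coe_coe] at this
        rw [this, LinearMap.lTensor_tmul, hm, TensorProduct.tmul_zero]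
      have : (v₀ ⊗ₜ[k] m : V ⊗[k] M') = 0 := by
        apply Heq.injective
        rw [hz, map_zero]
      exact tmul_eq_zero' hv₀ this
    have hdim : Module.finrank k M' = Module.finrank k M := by
      have h1 := (F.trans F'.symm).finrank_eq
      rw [Module.finrank_tensorProduct, Module.finrank_tensorProduct] at h1
      exact (Nat.eq_of_mul_eq_mul_left Module.finrank_pos h1).symm
    refine ⟨f, (g₀.linearEquivOfInjective hg₀inj hdim).symm, ?_⟩
    apply TensorProduct.ext'
    intro v m
    simp only [LinearMap.comp_apply, TensorProduct.map_tmul, LinearEquiv.coe_coe]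
    set gEq := g₀.linearEquivOfInjective hg₀inj hdim with hgEq
    have hm : g₀ (gEq.symm m) = m := by
      have := gEq.apply_symm_apply m
      rwa [hgEq, LinearMap.linearEquivOfInjective_apply] at this
    have hHe : Heq (v ⊗ₜ gEq.symm m) = v ⊗ₜ m := by
      have := LinearMap.congr_fun hg₀ (v ⊗ₜ gEq.symm m)
      simp only [LinearEquiv.coe_coe] at this
      rw [this, LinearMap.lTensor_tmul, hm]
    rw [hHt] at hHe
    have hHe2 := congrArg (fun z => TensorProduct.map f.toLinearMap f.toLinearMap
      ((F : V ⊗[k] M →ₗ[k] V ⊗[k] V) z)) hHe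
    simp only [LinearEquiv.coe_coe, LinearEquiv.apply_symm_apply] at hHe2
    have hqp : ∀ z : V ⊗[k] V, TensorProduct.map f.toLinearMap f.toLinearMap
        (TensorProduct.map f.symm.toLinearMap f.symm.toLinearMap z) = z := by
      intro z
      have := map_map_symm f.symm f.symm z
      simpa using this
    rw [hqp] at hHe2
    rw [← hHe2]
    have : TensorProduct.map f.toLinearMap LinearMap.id (v ⊗ₜ[k] gEq.symm m) =
        f v ⊗ₜ gEq.symm m := by simp
    rw [this]
  · rintro ⟨f, g, hfg⟩
    have hone : f.conj (1 : Module.End k V) = 1 := by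
      ext v
      simp [LinearEquiv.conj_apply]
    have hmul : ∀ x y : Module.End k V, f.conj (x * y) = f.conj x * f.conj y := by
      intro x y
      ext v
      simp [LinearEquiv.conj_apply, Module.End.mul_apply]
    refine ⟨AlgEquiv.ofLinearEquiv f.conj hone hmul, ?_⟩
    intro x
    have hconj : ∀ y : Module.End k V, (AlgEquiv.ofLinearEquiv f.conj hone hmul) y =
        f.toLinearMap ∘ₗ y ∘ₗ f.symm.toLinearMap := by
      intro y
      rw [AlgEquiv.ofLinearEquiv_apply, LinearEquiv.conj_apply, LinearMap.comp_assoc]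
    rw [conj_hth f _ hconj, hconj x]
    have hfgApp : ∀ (v : V) (m : M),
        TensorProduct.map f.toLinearMap f.toLinearMap (F (v ⊗ₜ m)) = F' (f v ⊗ₜ g m) := by
      intro v m
      have := LinearMap.congr_fun hfg (v ⊗ₜ m)
      simpa using this
    have hqp : ∀ z : V ⊗[k] V, TensorProduct.map f.toLinearMap f.toLinearMap
        (TensorProduct.map f.symm.toLinearMap f.symm.toLinearMap z) = z := by
      intro z
      have := map_map_symm f.symm f.symm z
      simpa using this
    have hCsurj : Function.Surjective
        (TensorProduct.map f.toLinearMap f.toLinearMap ∘ₗ (F : V ⊗[k] M →ₗ[k] V ⊗[k] V)) := by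
      intro t
      refine ⟨F.symm (TensorProduct.map f.symm.toLinearMap f.symm.toLinearMap t), ?_⟩
      simp only [LinearMap.comp_apply, LinearEquiv.coe_coe, LinearEquiv.apply_symm_apply]
      exact hqp t
    rw [← LinearMap.cancel_right hCsurj]
    apply TensorProduct.ext'
    intro v m
    simp only [LinearMap.comp_apply, LinearEquiv.coe_coe]
    rw [map_map_symm, LinearEquiv.symm_apply_apply, LinearMap.rTensor_tmul, hfgApp (x v) m,
      hfgApp v m, LinearEquiv.symm_apply_apply, LinearMap.rTensor_tmul]
    simp only [LinearMap.comp_apply, LinearEquiv.coe_coe, LinearEquiv.symm_apply_apply]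


end
end

section
/- Let k be a field, V ≠ 0 and M, M' k-vector spaces, and suppose (F, Φ) on (V, M) and (F', Φ') on (V, M') are solutions of the modified pentagon equation. If f : V → V and g : M → M' are k-linear isomorphisms with (f ⊗ f) ∘ F = F' ∘ (f ⊗ g), then (g ⊗ g) ∘ Φ = Φ' ∘ (g ⊗ g). -/
open TensorProduct

noncomputable section

variable {k : Type*} [Field k]

section Aux

variable {A B C A' B' C' P Q P' Q' D : Type*}
  [AddCommGroup A] [AddCommGroup B] [AddCommGroup C]
  [AddCommGroup A'] [AddCommGroup B'] [AddCommGroup C']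
  [AddCommGroup P] [AddCommGroup Q] [AddCommGroup P'] [AddCommGroup Q'] [AddCommGroup D]
  [Module k A] [Module k B] [Module k C] [Module k A'] [Module k B'] [Module k C']
  [Module k P] [Module k Q] [Module k P'] [Module k Q'] [Module k D]

lemma ext_triple {f h : A ⊗[k] (B ⊗[k] C) →ₗ[k] D}
    (H : ∀ a b c, f (a ⊗ₜ[k] (b ⊗ₜ[k] c)) = h (a ⊗ₜ[k] (b ⊗ₜ[k] c))) : f = h := by
  apply TensorProduct.ext'
  intro a y
  induction y using TensorProduct.induction_on with
  | zero => simp [tmul_zero]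
  | tmul b c => exact H a b c
  | add y z hy hz => rw [tmul_add, map_add, map_add, hy, hz]

lemma m12_tmul (G : A ⊗[k] B →ₗ[k] P ⊗[k] Q) (a : A) (b : B) (c : C) :
    m12 G (a ⊗ₜ[k] (b ⊗ₜ[k] c)) =
      (TensorProduct.assoc k P Q C) ((G (a ⊗ₜ[k] b)) ⊗ₜ[k] c) := by
  simp [m12]

lemma m23_tmul (G : B ⊗[k] C →ₗ[k] Q ⊗[k] P) (a : A) (b : B) (c : C) :
    m23 G (a ⊗ₜ[k] (b ⊗ₜ[k] c)) = a ⊗ₜ[k] G (b ⊗ₜ[k] c) := rfl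

lemma m13_tmul (G : A ⊗[k] C →ₗ[k] P ⊗[k] Q) (a : A) (b : B) (c : C) :
    m13 G (a ⊗ₜ[k] (b ⊗ₜ[k] c)) =
      ((TensorProduct.comm k Q B).toLinearMap.lTensor P)
        ((TensorProduct.assoc k P Q B) ((G (a ⊗ₜ[k] c)) ⊗ₜ[k] b)) := by
  simp [m13]

lemma m12_intertwine (G : A ⊗[k] B →ₗ[k] P ⊗[k] Q) (G' : A' ⊗[k] B' →ₗ[k] P' ⊗[k] Q')
    (p : P →ₗ[k] P') (q : Q →ₗ[k] Q') (a : A →ₗ[k] A') (b : B →ₗ[k] B') (r : C →ₗ[k] C')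
    (h : TensorProduct.map p q ∘ₗ G = G' ∘ₗ TensorProduct.map a b) :
    TensorProduct.map p (TensorProduct.map q r) ∘ₗ m12 G
      = m12 G' ∘ₗ TensorProduct.map a (TensorProduct.map b r) := by
  apply ext_triple
  intro x y z
  have hh := LinearMap.congr_fun h (x ⊗ₜ[k] y)
  simp only [LinearMap.comp_apply, map_tmul] at hh ⊢
  rw [m12_tmul, m12_tmul, map_map_assoc, map_tmul, hh]

lemma m23_intertwine (G : B ⊗[k] C →ₗ[k] P ⊗[k] Q) (G' : B' ⊗[k] C' →ₗ[k] P' ⊗[k] Q')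
    (p : P →ₗ[k] P') (q : Q →ₗ[k] Q') (a : B →ₗ[k] B') (b : C →ₗ[k] C') (r : A →ₗ[k] A')
    (h : TensorProduct.map p q ∘ₗ G = G' ∘ₗ TensorProduct.map a b) :
    TensorProduct.map r (TensorProduct.map p q) ∘ₗ m23 G
      = m23 G' ∘ₗ TensorProduct.map r (TensorProduct.map a b) := by
  apply ext_triple
  intro x y z
  have hh := LinearMap.congr_fun h (y ⊗ₜ[k] z)
  simp only [LinearMap.comp_apply, map_tmul] at hh ⊢
  rw [m23_tmul, m23_tmul, map_tmul, hh]

lemma m13_intertwine (G : A ⊗[k] C →ₗ[k] P ⊗[k] Q) (G' : A' ⊗[k] C' →ₗ[k] P' ⊗[k] Q')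
    (p : P →ₗ[k] P') (q : Q →ₗ[k] Q') (a : A →ₗ[k] A') (b : C →ₗ[k] C') (r : B →ₗ[k] B')
    (h : TensorProduct.map p q ∘ₗ G = G' ∘ₗ TensorProduct.map a b) :
    TensorProduct.map p (TensorProduct.map r q) ∘ₗ m13 G
      = m13 G' ∘ₗ TensorProduct.map a (TensorProduct.map r b) := by
  apply ext_triple
  intro x y z
  have hh := LinearMap.congr_fun h (x ⊗ₜ[k] z)
  simp only [LinearMap.comp_apply, map_tmul] at hh ⊢
  rw [m13_tmul, m13_tmul]
  have nat1 : ∀ w : P ⊗[k] Q,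
      TensorProduct.map p (TensorProduct.map r q)
        (((TensorProduct.comm k Q B).toLinearMap.lTensor P)
          ((TensorProduct.assoc k P Q B) (w ⊗ₜ[k] y))) =
      ((TensorProduct.comm k Q' B').toLinearMap.lTensor P')
        ((TensorProduct.assoc k P' Q' B') ((TensorProduct.map p q w) ⊗ₜ[k] r y)) := by
    intro w
    induction w using TensorProduct.induction_on with
    | zero => simp
    | tmul u v => simp [LinearMap.lTensor_tmul]
    | add u v hu hv => simp only [add_tmul, map_add, hu, hv]
  rw [nat1, hh]

lemma m12_injective (G : A ⊗[k] B ≃ₗ[k] P ⊗[k] Q) :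
    Function.Injective (m12 (C := C) G.toLinearMap) := by
  have hinv : (m12 (C := C) G.symm.toLinearMap) ∘ₗ m12 G.toLinearMap = LinearMap.id := by
    apply ext_triple
    intro a b c
    simp only [LinearMap.comp_apply, LinearMap.id_apply]
    rw [m12_tmul]
    have : ∀ w : P ⊗[k] Q, m12 (C := C) G.symm.toLinearMap
        ((TensorProduct.assoc k P Q C) (w ⊗ₜ[k] c)) =
        (TensorProduct.assoc k A B C) ((G.symm w) ⊗ₜ[k] c) := by
      intro w
      induction w using TensorProduct.induction_on with
      | zero => simp
      | tmul u v => rw [assoc_tmul, m12_tmul]; rfl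
      | add u v hu hv => simp only [add_tmul, map_add, hu, hv]
    rw [this]
    simp
  intro x y hxy
  have := LinearMap.congr_fun hinv x
  have h2 := LinearMap.congr_fun hinv y
  simp only [LinearMap.comp_apply, LinearMap.id_apply] at this h2
  rw [← this, ← h2, hxy]

lemma m13_injective (G : A ⊗[k] C ≃ₗ[k] P ⊗[k] Q) :
    Function.Injective (m13 (B := B) G.toLinearMap) := by
  have hinv : (m13 (B := B) G.symm.toLinearMap) ∘ₗ m13 G.toLinearMap = LinearMap.id := by
    apply ext_triple
    intro a b c
    simp only [LinearMap.comp_apply, LinearMap.id_apply]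
    rw [m13_tmul]
    have : ∀ w : P ⊗[k] Q,
        m13 (B := B) G.symm.toLinearMap
          (((TensorProduct.comm k Q B).toLinearMap.lTensor P)
            ((TensorProduct.assoc k P Q B) (w ⊗ₜ[k] b))) =
        ((TensorProduct.comm k C B).toLinearMap.lTensor A)
          ((TensorProduct.assoc k A C B) ((G.symm w) ⊗ₜ[k] b)) := by
      intro w
      induction w using TensorProduct.induction_on with
      | zero => simp
      | tmul u v =>
        simp only [assoc_tmul, LinearMap.lTensor_tmul, LinearEquiv.coe_coe, comm_tmul]
        rw [m13_tmul]
        rfl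
      | add u v hu hv => simp only [add_tmul, map_add, hu, hv]
    rw [this]
    simp
  intro x y hxy
  have := LinearMap.congr_fun hinv x
  have h2 := LinearMap.congr_fun hinv y
  simp only [LinearMap.comp_apply, LinearMap.id_apply] at this h2
  rw [← this, ← h2, hxy]

lemma lTensor_map_cancel {V : Type*} [AddCommGroup V] [Module k V] [Nontrivial V]
    (S T : A →ₗ[k] B) (h : S.lTensor V = T.lTensor V) : S = T := by
  obtain ⟨v, hv⟩ := exists_ne (0 : V)
  obtain ⟨φ, hφ⟩ : ∃ φ : Module.Dual k V, φ v ≠ 0 := by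
    by_contra hc
    push_neg at hc
    exact hv ((Module.forall_dual_apply_eq_zero_iff k v).mp hc)
  ext x
  have h1 := LinearMap.congr_fun h (v ⊗ₜ[k] x)
  simp only [LinearMap.lTensor_tmul] at h1
  have h2 := congrArg (fun z => (TensorProduct.lid k B)
      ((TensorProduct.map φ (LinearMap.id : B →ₗ[k] B)) z)) h1
  simp only [map_tmul, lid_tmul, LinearMap.id_apply] at h2
  exact smul_right_injective B hφ h2

end Aux

/-- If `(F, Φ)` and `(F', Φ')` solve the modified pentagon equation on `(V, M)`
and `(V, M')`, and `f : V ≃ V`, `g : M ≃ M'` satisfy `(f ⊗ f) ∘ F = F' ∘ (f ⊗ g)`, then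
`(g ⊗ g) ∘ Φ = Φ' ∘ (g ⊗ g)`. -/
theorem stmt5 {V M M' : Type}
    [AddCommGroup V] [Module k V] [Nontrivial V]
    [AddCommGroup M] [Module k M] [AddCommGroup M'] [Module k M']
    (F : V ⊗[k] M ≃ₗ[k] V ⊗[k] V) (Φ : M ⊗[k] M ≃ₗ[k] M ⊗[k] M)
    (F' : V ⊗[k] M' ≃ₗ[k] V ⊗[k] V) (Φ' : M' ⊗[k] M' ≃ₗ[k] M' ⊗[k] M')
    (hFΦ : MPE F.toLinearMap Φ.toLinearMap) (hF'Φ' : MPE F'.toLinearMap Φ'.toLinearMap)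
    (f : V ≃ₗ[k] V) (g : M ≃ₗ[k] M')
    (hfg : TensorProduct.map f.toLinearMap f.toLinearMap ∘ₗ F.toLinearMap =
      F'.toLinearMap ∘ₗ TensorProduct.map f.toLinearMap g.toLinearMap) :
    TensorProduct.map g.toLinearMap g.toLinearMap ∘ₗ Φ.toLinearMap =
      Φ'.toLinearMap ∘ₗ TensorProduct.map g.toLinearMap g.toLinearMap := by
  set fl := f.toLinearMap with hfl
  set gl := g.toLinearMap with hgl
  set Fl := F.toLinearMap with hFl
  set Fl' := F'.toLinearMap with hFl'
  set Φl := Φ.toLinearMap with hΦl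
  set Φl' := Φ'.toLinearMap with hΦl'
  unfold MPE at hFΦ hF'Φ'
  -- abbreviations
  set AA : M ⊗[k] M →ₗ[k] M' ⊗[k] M' := TensorProduct.map gl gl ∘ₗ Φl with hAA
  set BB : M ⊗[k] M →ₗ[k] M' ⊗[k] M' := Φl' ∘ₗ TensorProduct.map gl gl with hBB
  -- intertwining relations
  have h12 : TensorProduct.map fl (TensorProduct.map fl fl) ∘ₗ m12 Fl
      = m12 Fl' ∘ₗ TensorProduct.map fl (TensorProduct.map gl fl) :=
    m12_intertwine Fl Fl' fl fl fl gl fl hfg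
  have h12' : TensorProduct.map fl (TensorProduct.map fl gl) ∘ₗ m12 Fl
      = m12 Fl' ∘ₗ TensorProduct.map fl (TensorProduct.map gl gl) :=
    m12_intertwine Fl Fl' fl fl fl gl gl hfg
  have h13 : TensorProduct.map fl (TensorProduct.map gl fl) ∘ₗ m13 Fl
      = m13 Fl' ∘ₗ TensorProduct.map fl (TensorProduct.map gl gl) :=
    m13_intertwine Fl Fl' fl fl fl gl gl hfg
  have h23F : TensorProduct.map fl (TensorProduct.map fl fl) ∘ₗ m23 Fl
      = m23 Fl' ∘ₗ TensorProduct.map fl (TensorProduct.map fl gl) :=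
    m23_intertwine Fl Fl' fl fl fl gl fl hfg
  -- absorbing Φ into the map
  have hT1 : TensorProduct.map fl (TensorProduct.map gl gl) ∘ₗ m23 Φl
      = TensorProduct.map fl AA := by
    have : m23 (A := V) Φl = TensorProduct.map LinearMap.id Φl := rfl
    rw [this, ← TensorProduct.map_comp, LinearMap.comp_id]
  have hT2 : m23 Φl' ∘ₗ TensorProduct.map fl (TensorProduct.map gl gl)
      = TensorProduct.map fl BB := by
    have : m23 (A := V) Φl' = TensorProduct.map LinearMap.id Φl' := rfl
    rw [this, ← TensorProduct.map_comp, LinearMap.id_comp]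
  -- main computation
  have key : m12 Fl' ∘ₗ m13 Fl' ∘ₗ TensorProduct.map fl AA
      = m12 Fl' ∘ₗ m13 Fl' ∘ₗ TensorProduct.map fl BB := by
    calc m12 Fl' ∘ₗ m13 Fl' ∘ₗ TensorProduct.map fl AA
        = m12 Fl' ∘ₗ m13 Fl' ∘ₗ
            (TensorProduct.map fl (TensorProduct.map gl gl) ∘ₗ m23 Φl) := by rw [hT1]
      _ = m12 Fl' ∘ₗ (m13 Fl' ∘ₗ TensorProduct.map fl (TensorProduct.map gl gl)) ∘ₗ m23 Φl := by
            rw [LinearMap.comp_assoc]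
      _ = m12 Fl' ∘ₗ (TensorProduct.map fl (TensorProduct.map gl fl) ∘ₗ m13 Fl) ∘ₗ m23 Φl := by
            rw [h13]
      _ = (m12 Fl' ∘ₗ TensorProduct.map fl (TensorProduct.map gl fl)) ∘ₗ m13 Fl ∘ₗ m23 Φl := by
            rw [LinearMap.comp_assoc, LinearMap.comp_assoc]
      _ = (TensorProduct.map fl (TensorProduct.map fl fl) ∘ₗ m12 Fl) ∘ₗ m13 Fl ∘ₗ m23 Φl := by
            rw [h12]
      _ = TensorProduct.map fl (TensorProduct.map fl fl) ∘ₗ (m12 Fl ∘ₗ m13 Fl ∘ₗ m23 Φl) := by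
            rw [LinearMap.comp_assoc]
      _ = TensorProduct.map fl (TensorProduct.map fl fl) ∘ₗ (m23 Fl ∘ₗ m12 Fl) := by
            rw [hFΦ]
      _ = (TensorProduct.map fl (TensorProduct.map fl fl) ∘ₗ m23 Fl) ∘ₗ m12 Fl := by
            rw [LinearMap.comp_assoc]
      _ = (m23 Fl' ∘ₗ TensorProduct.map fl (TensorProduct.map fl gl)) ∘ₗ m12 Fl := by
            rw [h23F]
      _ = m23 Fl' ∘ₗ (TensorProduct.map fl (TensorProduct.map fl gl) ∘ₗ m12 Fl) := by
            rw [LinearMap.comp_assoc]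
      _ = m23 Fl' ∘ₗ (m12 Fl' ∘ₗ TensorProduct.map fl (TensorProduct.map gl gl)) := by
            rw [h12']
      _ = (m23 Fl' ∘ₗ m12 Fl') ∘ₗ TensorProduct.map fl (TensorProduct.map gl gl) := by
            rw [LinearMap.comp_assoc]
      _ = (m12 Fl' ∘ₗ m13 Fl' ∘ₗ m23 Φl') ∘ₗ TensorProduct.map fl (TensorProduct.map gl gl) := by
            rw [hF'Φ']
      _ = m12 Fl' ∘ₗ m13 Fl' ∘ₗ (m23 Φl' ∘ₗ TensorProduct.map fl (TensorProduct.map gl gl)) := by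
            rw [LinearMap.comp_assoc, LinearMap.comp_assoc]
      _ = m12 Fl' ∘ₗ m13 Fl' ∘ₗ TensorProduct.map fl BB := by rw [hT2]
  -- cancel the isomorphisms m12 F' and m13 F'
  have hmap : TensorProduct.map fl AA = TensorProduct.map fl BB := by
    apply LinearMap.ext
    intro x
    have hx := LinearMap.congr_fun key x
    simp only [LinearMap.comp_apply] at hx
    exact m13_injective F' (m12_injective F' hx)
  -- cancel f
  have hlT : AA.lTensor V = BB.lTensor V := by
    have comp1 : TensorProduct.map f.symm.toLinearMap (LinearMap.id : M' ⊗[k] M' →ₗ[k] M' ⊗[k] M')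
        ∘ₗ TensorProduct.map fl AA = AA.lTensor V := by
      apply TensorProduct.ext'
      intro v y
      simp [hfl]
    have comp2 : TensorProduct.map f.symm.toLinearMap (LinearMap.id : M' ⊗[k] M' →ₗ[k] M' ⊗[k] M')
        ∘ₗ TensorProduct.map fl BB = BB.lTensor V := by
      apply TensorProduct.ext'
      intro v y
      simp [hfl]
    rw [← comp1, ← comp2, hmap]
  exact lTensor_map_cancel AA BB hlT

end
end

section
/- Let k be a field and V, M k-vector spaces, and suppose (F, Φ) satisfies the modified pentagon equation. Let t : V ⊗ V → V ⊗ V and τ : M ⊗ M → M ⊗ M be the flip isomorphisms exchanging the two tensor factors. Then the pair (t ∘ F, τ ∘ Φ⁻¹ ∘ τ) also satisfies the modified pentagon equation on (V, M). -/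
open TensorProduct

noncomputable section

variable {k : Type*} [Field k]

/-- Key inverse-free identity (E):
`(t∘F)₁₂ ∘ (t∘F)₁₃ ∘ τ₂₃ = σ₁₃ ∘ F₂₃ ∘ F₁₂` elementwise. -/
lemma lemE {V M : Type} [AddCommGroup V] [Module k V] [AddCommGroup M] [Module k M]
    (F : V ⊗[k] M →ₗ[k] V ⊗[k] V) :
    m12 ((TensorProduct.comm k V V).toLinearMap ∘ₗ F) ∘ₗ
      m13 ((TensorProduct.comm k V V).toLinearMap ∘ₗ F) ∘ₗ
      m23 (A := V) (TensorProduct.comm k M M).toLinearMap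
    = m13 (B := V) (TensorProduct.comm k V V).toLinearMap ∘ₗ m23 F ∘ₗ m12 F := by
  ext v m n
  simp [m12, m13, m23]
  generalize F (v ⊗ₜ[k] m) = x
  induction x using TensorProduct.induction_on with
  | zero => simp
  | tmul p q =>
    simp only [assoc_tmul, assoc_symm_tmul, comm_tmul, LinearMap.lTensor_tmul,
      LinearMap.rTensor_tmul, LinearMap.coe_comp, Function.comp_apply, LinearEquiv.coe_coe]
    generalize F (q ⊗ₜ[k] n) = y
    induction y using TensorProduct.induction_on with
    | zero => simp
    | tmul s w =>
      simp [assoc_tmul, assoc_symm_tmul, comm_tmul, LinearMap.lTensor_tmul,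
        LinearMap.rTensor_tmul]
    | add y1 y2 h1 h2 =>
      simp only [tmul_add, add_tmul, map_add]
      rw [h1, h2]
  | add x1 x2 h1 h2 =>
    simp only [tmul_add, add_tmul, map_add]
    rw [h1, h2]

/-- Key inverse-free identity (D):
`(t∘F)₂₃ ∘ (t∘F)₁₂ ∘ τ₂₃ = σ₁₃ ∘ F₁₂ ∘ F₁₃` elementwise. -/
lemma lemD {V M : Type} [AddCommGroup V] [Module k V] [AddCommGroup M] [Module k M]
    (F : V ⊗[k] M →ₗ[k] V ⊗[k] V) :
    m23 ((TensorProduct.comm k V V).toLinearMap ∘ₗ F) ∘ₗ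
      m12 ((TensorProduct.comm k V V).toLinearMap ∘ₗ F) ∘ₗ
      m23 (A := V) (TensorProduct.comm k M M).toLinearMap
    = m13 (B := V) (TensorProduct.comm k V V).toLinearMap ∘ₗ m12 F ∘ₗ m13 F := by
  ext v m n
  simp [m12, m13, m23]
  generalize F (v ⊗ₜ[k] n) = x
  induction x using TensorProduct.induction_on with
  | zero => simp
  | tmul p q =>
    simp only [assoc_tmul, assoc_symm_tmul, comm_tmul, LinearMap.lTensor_tmul,
      LinearMap.rTensor_tmul, LinearMap.coe_comp, Function.comp_apply, LinearEquiv.coe_coe]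
    generalize F (p ⊗ₜ[k] m) = y
    induction y using TensorProduct.induction_on with
    | zero => simp
    | tmul s w =>
      simp [assoc_tmul, assoc_symm_tmul, comm_tmul, LinearMap.lTensor_tmul,
        LinearMap.rTensor_tmul]
    | add y1 y2 h1 h2 =>
      simp only [tmul_add, add_tmul, map_add]
      rw [h1, h2]
  | add x1 x2 h1 h2 =>
    simp only [tmul_add, add_tmul, map_add]
    rw [h1, h2]

/-- If `(F, Φ)` satisfies the modified pentagon equation on `(V, M)`, then so
does `(t ∘ F, τ ∘ Φ⁻¹ ∘ τ)`, where `t` and `τ` are the flips of `V ⊗ V` and `M ⊗ M`. -/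
theorem stmt7 {V M : Type}
    [AddCommGroup V] [Module k V] [AddCommGroup M] [Module k M]
    (F : V ⊗[k] M ≃ₗ[k] V ⊗[k] V) (Φ : M ⊗[k] M ≃ₗ[k] M ⊗[k] M)
    (hFΦ : MPE F.toLinearMap Φ.toLinearMap) :
    MPE ((TensorProduct.comm k V V).toLinearMap ∘ₗ F.toLinearMap)
      ((TensorProduct.comm k M M).toLinearMap ∘ₗ Φ.symm.toLinearMap ∘ₗ
        (TensorProduct.comm k M M).toLinearMap) := by
  set t := (TensorProduct.comm k V V).toLinearMap with ht
  set τ := (TensorProduct.comm k M M).toLinearMap with hτ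
  unfold MPE at hFΦ ⊢
  have hττ : ∀ x : M ⊗[k] M, (TensorProduct.comm k M M) ((TensorProduct.comm k M M) x) = x := by
    intro x
    induction x using TensorProduct.induction_on with
    | zero => simp
    | tmul a b => simp
    | add a b ha hb => simp [map_add, ha, hb]
  -- X := m23 (τ ∘ Φ), a surjective map on V ⊗ (M ⊗ M)
  have hsurj : Function.Surjective (m23 (A := V) (τ ∘ₗ Φ.toLinearMap)) := by
    intro z
    refine ⟨(LinearMap.lTensor V (Φ.symm.toLinearMap ∘ₗ τ)) z, ?_⟩
    show (LinearMap.lTensor V (τ ∘ₗ Φ.toLinearMap)) _ = z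
    rw [← LinearMap.comp_apply, ← LinearMap.lTensor_comp]
    have : (τ ∘ₗ Φ.toLinearMap) ∘ₗ Φ.symm.toLinearMap ∘ₗ τ = LinearMap.id := by
      apply LinearMap.ext; intro x
      simp [hτ, hττ]
    rw [this, LinearMap.lTensor_id, LinearMap.id_apply]
  rw [← LinearMap.cancel_right hsurj]
  -- key cancellation: m23 (τ ∘ Φ⁻¹ ∘ τ) ∘ m23 (τ ∘ Φ) = m23 τ
  have hcancel : m23 (A := V) (τ ∘ₗ Φ.symm.toLinearMap ∘ₗ τ) ∘ₗ
      m23 (A := V) (τ ∘ₗ Φ.toLinearMap) = m23 (A := V) τ := by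
    show LinearMap.lTensor V _ ∘ₗ LinearMap.lTensor V _ = LinearMap.lTensor V _
    rw [← LinearMap.lTensor_comp]
    congr 1
    apply LinearMap.ext; intro x
    simp [hτ, hττ]
  have hsplit : m23 (A := V) (τ ∘ₗ Φ.toLinearMap) =
      m23 (A := V) τ ∘ₗ m23 (A := V) Φ.toLinearMap := by
    exact LinearMap.lTensor_comp V τ Φ.toLinearMap
  calc (m12 (t ∘ₗ F.toLinearMap) ∘ₗ m13 (t ∘ₗ F.toLinearMap) ∘ₗ
          m23 (τ ∘ₗ Φ.symm.toLinearMap ∘ₗ τ)) ∘ₗ m23 (A := V) (τ ∘ₗ Φ.toLinearMap)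
      = m12 (t ∘ₗ F.toLinearMap) ∘ₗ m13 (t ∘ₗ F.toLinearMap) ∘ₗ
          (m23 (τ ∘ₗ Φ.symm.toLinearMap ∘ₗ τ) ∘ₗ m23 (A := V) (τ ∘ₗ Φ.toLinearMap)) := by
        simp only [LinearMap.comp_assoc]
    _ = m12 (t ∘ₗ F.toLinearMap) ∘ₗ m13 (t ∘ₗ F.toLinearMap) ∘ₗ m23 (A := V) τ := by
        rw [hcancel]
    _ = m13 (B := V) t ∘ₗ m23 F.toLinearMap ∘ₗ m12 F.toLinearMap := lemE F.toLinearMap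
    _ = m13 (B := V) t ∘ₗ (m12 F.toLinearMap ∘ₗ m13 F.toLinearMap ∘ₗ m23 Φ.toLinearMap) := by
        rw [hFΦ]
    _ = (m13 (B := V) t ∘ₗ m12 F.toLinearMap ∘ₗ m13 F.toLinearMap) ∘ₗ m23 Φ.toLinearMap := by
        simp only [LinearMap.comp_assoc]
    _ = (m23 (t ∘ₗ F.toLinearMap) ∘ₗ m12 (t ∘ₗ F.toLinearMap) ∘ₗ m23 (A := V) τ) ∘ₗ
          m23 Φ.toLinearMap := by rw [lemD F.toLinearMap]
    _ = (m23 (t ∘ₗ F.toLinearMap) ∘ₗ m12 (t ∘ₗ F.toLinearMap)) ∘ₗ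
          m23 (A := V) (τ ∘ₗ Φ.toLinearMap) := by
        rw [hsplit]; simp only [LinearMap.comp_assoc]

end
end

section
/- Let k be a field and suppose (F, Φ) is a solution of the modified pentagon equation on (V, M) and (F', Φ') is a solution on (V', M'). Define G : (V ⊗ V') ⊗ (M ⊗ M') → (V ⊗ V') ⊗ (V ⊗ V') as the conjugate of F ⊗ F' by the canonical isomorphisms exchanging the two middle tensor factors (i.e. G = s ∘ (F ⊗ F') ∘ s', where s' : (V ⊗ V') ⊗ (M ⊗ M') → (V ⊗ M) ⊗ (V' ⊗ M') and s : (V ⊗ V) ⊗ (V' ⊗ V') → (V ⊗ V') ⊗ (V ⊗ V') swap the second and third factors), and define Ξ on (M ⊗ M') ⊗ (M ⊗ M') analogously from Φ ⊗ Φ'. Then (G, Ξ) is a solution of the modified pentagon equation on (V ⊗ V', M ⊗ M'). -/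
open TensorProduct

noncomputable section

variable {k : Type*} [Field k]

/-! Each leg `G₁₂`, `G₁₃`, `Ξ₂₃` of the product solution is conjugate, by the shuffle
`(V ⊗ V') ⊗ (V ⊗ V') ⊗ (V ⊗ V') ≅ (V ⊗ V ⊗ V) ⊗ (V' ⊗ V' ⊗ V')`, to the tensor product of the
corresponding legs of `(F, Φ)` and `(F', Φ')`. The modified pentagon equation for the product is
therefore the conjugate of the tensor product of the two given ones. -/

namespace TensorProduct

variable {A A' B B' C C' P P' Q Q' R R' : Type*}
  [AddCommGroup A] [AddCommGroup A'] [AddCommGroup B] [AddCommGroup B']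
  [AddCommGroup C] [AddCommGroup C'] [AddCommGroup P] [AddCommGroup P']
  [AddCommGroup Q] [AddCommGroup Q'] [AddCommGroup R] [AddCommGroup R']
  [Module k A] [Module k A'] [Module k B] [Module k B'] [Module k C] [Module k C']
  [Module k P] [Module k P'] [Module k Q] [Module k Q'] [Module k R] [Module k R']

variable (k A A' B B' C C') in
def tripleTensorComm :
    (A ⊗[k] A') ⊗[k] ((B ⊗[k] B') ⊗[k] (C ⊗[k] C')) ≃ₗ[k]
      (A ⊗[k] (B ⊗[k] C)) ⊗[k] (A' ⊗[k] (B' ⊗[k] C')) :=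
  (congr (LinearEquiv.refl k _) (tensorTensorTensorComm k B B' C C')).trans
    (tensorTensorTensorComm k A A' (B ⊗[k] C) (B' ⊗[k] C'))

def mapTensorTensorComm
    (F : A ⊗[k] B →ₗ[k] P ⊗[k] Q) (F' : A' ⊗[k] B' →ₗ[k] P' ⊗[k] Q') :
    (A ⊗[k] A') ⊗[k] (B ⊗[k] B') →ₗ[k] (P ⊗[k] P') ⊗[k] (Q ⊗[k] Q') :=
  (tensorTensorTensorComm k P Q P' Q').toLinearMap ∘ₗ map F F' ∘ₗ
    (tensorTensorTensorComm k A A' B B').toLinearMap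

theorem m12_mapTensorTensorComm
    (F : A ⊗[k] B →ₗ[k] P ⊗[k] Q) (F' : A' ⊗[k] B' →ₗ[k] P' ⊗[k] Q') :
    m12 (C := C ⊗[k] C') (mapTensorTensorComm F F') =
      (tripleTensorComm k P P' Q Q' C C').symm.toLinearMap ∘ₗ
        map (m12 (C := C) F) (m12 (C := C') F') ∘ₗ
        (tripleTensorComm k A A' B B' C C').toLinearMap := by
  ext a a' b b' c c'
  simp only [m12, mapTensorTensorComm, tripleTensorComm, LinearMap.coe_comp, LinearEquiv.coe_coe,
    Function.comp_apply, assoc_symm_tmul, map_tmul, LinearMap.rTensor_tmul,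
    tensorTensorTensorComm_tmul, congr_tmul, LinearEquiv.refl_apply, LinearEquiv.trans_apply,
    AlgebraTensorModule.curry_apply, curry_apply, LinearMap.coe_restrictScalars]
  -- `F (a ⊗ₜ b)` need not be a pure tensor, so the check on generators needs a second induction.
  generalize F (a ⊗ₜ b) = t, F' (a' ⊗ₜ b') = t'
  induction t with
  | tmul p q => induction t' <;> simp_all [tmul_add, add_tmul]
  | _ => simp_all [add_tmul]

theorem m23_mapTensorTensorComm
    (G : B ⊗[k] C →ₗ[k] Q ⊗[k] R) (G' : B' ⊗[k] C' →ₗ[k] Q' ⊗[k] R') :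
    m23 (A := A ⊗[k] A') (mapTensorTensorComm G G') =
      (tripleTensorComm k A A' Q Q' R R').symm.toLinearMap ∘ₗ
        map (m23 (A := A) G) (m23 (A := A') G') ∘ₗ
        (tripleTensorComm k A A' B B' C C').toLinearMap := by
  ext a a' b b' c c'
  simp only [m23, mapTensorTensorComm, tripleTensorComm, LinearMap.coe_comp, LinearEquiv.coe_coe,
    Function.comp_apply, map_tmul, LinearMap.lTensor_tmul,
    tensorTensorTensorComm_tmul, congr_tmul, LinearEquiv.refl_apply, LinearEquiv.trans_apply,
    AlgebraTensorModule.curry_apply, curry_apply, LinearMap.coe_restrictScalars]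
  generalize G (b ⊗ₜ c) = t, G' (b' ⊗ₜ c') = t'
  induction t with
  | tmul q r => induction t' <;> simp_all [tmul_add]
  | _ => simp_all [tmul_add, add_tmul]

theorem m13_mapTensorTensorComm
    (G : A ⊗[k] C →ₗ[k] P ⊗[k] R) (G' : A' ⊗[k] C' →ₗ[k] P' ⊗[k] R') :
    m13 (B := B ⊗[k] B') (mapTensorTensorComm G G') =
      (tripleTensorComm k P P' B B' R R').symm.toLinearMap ∘ₗ
        map (m13 (B := B) G) (m13 (B := B') G') ∘ₗ
        (tripleTensorComm k A A' B B' C C').toLinearMap := by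
  ext a a' b b' c c'
  simp only [m13, mapTensorTensorComm, tripleTensorComm, LinearMap.coe_comp, LinearEquiv.coe_coe,
    Function.comp_apply, assoc_symm_tmul, map_tmul, LinearMap.rTensor_tmul,
    LinearMap.lTensor_tmul, comm_tmul, tensorTensorTensorComm_tmul, congr_tmul,
    LinearEquiv.refl_apply, LinearEquiv.trans_apply, AlgebraTensorModule.curry_apply,
    curry_apply, LinearMap.coe_restrictScalars]
  generalize G (a ⊗ₜ c) = t, G' (a' ⊗ₜ c') = t'
  induction t with
  | tmul p r => induction t' <;> simp_all [tmul_add, add_tmul]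
  | _ => simp_all [add_tmul]

end TensorProduct

open TensorProduct in
theorem MPE.mapTensorTensorComm {V M V' M' : Type*}
    [AddCommGroup V] [Module k V] [AddCommGroup M] [Module k M]
    [AddCommGroup V'] [Module k V'] [AddCommGroup M'] [Module k M']
    {F : V ⊗[k] M →ₗ[k] V ⊗[k] V} {Φ : M ⊗[k] M →ₗ[k] M ⊗[k] M}
    {F' : V' ⊗[k] M' →ₗ[k] V' ⊗[k] V'} {Φ' : M' ⊗[k] M' →ₗ[k] M' ⊗[k] M'}
    (h : MPE F Φ) (h' : MPE F' Φ') :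
    MPE (mapTensorTensorComm F F') (mapTensorTensorComm Φ Φ') := by
  rw [MPE, ← LinearMap.comp_assoc] at h h' ⊢
  rw [m12_mapTensorTensorComm, m13_mapTensorTensorComm, m23_mapTensorTensorComm,
    m23_mapTensorTensorComm, m12_mapTensorTensorComm]
  simp only [LinearMap.comp_assoc, LinearEquiv.comp_symm_assoc]
  simp only [← LinearMap.comp_assoc, ← map_comp, h, h']

/-- The "tensor product" of a solution `(F, Φ)` of the modified pentagon equation
on `(V, M)` and a solution `(F', Φ')` on `(V', M')`, obtained by conjugating `F ⊗ F'` and `Φ ⊗ Φ'`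
with the middle-factor swaps, is a solution on `(V ⊗ V', M ⊗ M')`. -/
theorem stmt8 {V M V' M' : Type}
    [AddCommGroup V] [Module k V] [AddCommGroup M] [Module k M]
    [AddCommGroup V'] [Module k V'] [AddCommGroup M'] [Module k M']
    (F : V ⊗[k] M ≃ₗ[k] V ⊗[k] V) (Φ : M ⊗[k] M ≃ₗ[k] M ⊗[k] M)
    (F' : V' ⊗[k] M' ≃ₗ[k] V' ⊗[k] V') (Φ' : M' ⊗[k] M' ≃ₗ[k] M' ⊗[k] M')
    (hFΦ : MPE F.toLinearMap Φ.toLinearMap) (hF'Φ' : MPE F'.toLinearMap Φ'.toLinearMap) :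
    MPE (V := V ⊗[k] V') (M := M ⊗[k] M')
      ((TensorProduct.tensorTensorTensorComm k V V V' V').toLinearMap ∘ₗ
        TensorProduct.map F.toLinearMap F'.toLinearMap ∘ₗ
        (TensorProduct.tensorTensorTensorComm k V V' M M').toLinearMap)
      ((TensorProduct.tensorTensorTensorComm k M M M' M').toLinearMap ∘ₗ
        TensorProduct.map Φ.toLinearMap Φ'.toLinearMap ∘ₗ
        (TensorProduct.tensorTensorTensorComm k M M' M M').toLinearMap) :=
  hFΦ.mapTensorTensorComm hF'Φ'

end
end

section
/- Let H be a Hopf algebra over a field k and M a Hopf H-module with module structure (h, m) ↦ h·m and comodule structure δ_M(m) = Σ m₍₀₎ ⊗ m₍₁₎, and let Φ_M(m ⊗ n) = Σ m₍₀₎ ⊗ m₍₁₎·n. Let L be a k-vector space with a coassociative comultiplication Δ_L : L → L ⊗ L (Sweedler notation Δ_L(ℓ) = Σ ℓ₍₁₎ ⊗ ℓ₍₂₎) and a right H-module structure (ℓ, h) ↦ ℓ·h satisfying Δ_L(ℓ·h) = Σ ℓ₍₁₎·h₍₁₎ ⊗ ℓ₍₂₎·h₍₂₎ (right H-module coalgebra).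 Let V be a k-vector space with a coassociative right L-comodule structure Δ_V : V → V ⊗ L (Sweedler notation Δ_V(v) = Σ v₍₀₎ ⊗ v₍₁₎), and let π : L ⊗ M → V be a k-linear map satisfying π(ℓ·h ⊗ m) = π(ℓ ⊗ h·m) and Δ_V(π(ℓ ⊗ m)) = Σ π(ℓ₍₁₎ ⊗ m₍₀₎) ⊗ ℓ₍₂₎·m₍₁₎. Define F_V : V ⊗ M → V ⊗ V by F_V = (id_V ⊗ π) ∘ (Δ_V ⊗ id_M). Then (F_V)_{12} ∘ (F_V)_{13} ∘ (Φ_M)_{23} = (F_V)_{23} ∘ (F_V)_{12} as linear maps V ⊗ M ⊗ M → V ⊗ V ⊗ V. -/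
open TensorProduct

noncomputable section

variable {k : Type*} [Field k]

section HopfModule

variable (k : Type*) {H M : Type*} [Field k] [Ring H] [HopfAlgebra k H]
  [AddCommGroup M] [Module k M]

/-- The pair `(μ, δ)` makes `M` into a Hopf `H`-module: `μ` is a unital associative left
`H`-action, `δ` is a coassociative counital right `H`-comodule structure, and `δ` is
`H`-linear: `δ(h·m) = Σ h₍₁₎·m₍₀₎ ⊗ h₍₂₎ m₍₁₎`. -/
def IsHopfModule (μ : H ⊗[k] M →ₗ[k] M) (δ : M →ₗ[k] M ⊗[k] H) : Prop :=
  (∀ m : M, μ ((1 : H) ⊗ₜ[k] m) = m) ∧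
  (∀ (g h : H) (m : M), μ (g ⊗ₜ[k] μ (h ⊗ₜ[k] m)) = μ ((g * h) ⊗ₜ[k] m)) ∧
  (δ.rTensor H ∘ₗ δ =
    (TensorProduct.assoc k M H H).symm.toLinearMap ∘ₗ
      (Coalgebra.comul (R := k) (A := H)).lTensor M ∘ₗ δ) ∧
  ((TensorProduct.rid k M).toLinearMap ∘ₗ
      (Coalgebra.counit (R := k) (A := H)).lTensor M ∘ₗ δ = LinearMap.id) ∧
  (δ ∘ₗ μ =
    TensorProduct.map μ (LinearMap.mul' k H) ∘ₗ
      (TensorProduct.tensorTensorTensorComm k H H M H).toLinearMap ∘ₗ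
      TensorProduct.map (Coalgebra.comul (R := k) (A := H)) δ)

/-- The operator `Φ_M(m ⊗ n) = Σ m₍₀₎ ⊗ m₍₁₎·n` attached to a Hopf module `(M, μ, δ)`. -/
def hopfPhi (μ : H ⊗[k] M →ₗ[k] M) (δ : M →ₗ[k] M ⊗[k] H) : M ⊗[k] M →ₗ[k] M ⊗[k] M :=
  μ.lTensor M ∘ₗ (TensorProduct.assoc k M H M).toLinearMap ∘ₗ δ.rTensor M

end HopfModule

def auxG {L M H V : Type*} {k : Type*} [Field k]
    [AddCommGroup L] [Module k L] [AddCommGroup M] [Module k M]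
    [AddCommGroup H] [Module k H] [AddCommGroup V] [Module k V]
    (π : L ⊗[k] M →ₗ[k] V) (μL : L ⊗[k] H →ₗ[k] L) :
    ((V ⊗[k] L) ⊗[k] L) ⊗[k] ((M ⊗[k] H) ⊗[k] M) →ₗ[k] V ⊗[k] (V ⊗[k] V) :=
  (TensorProduct.map π (π ∘ₗ μL.rTensor M) ∘ₗ
      ((TensorProduct.assoc k L H M).symm.toLinearMap.lTensor (L ⊗[k] M)) ∘ₗ
      (TensorProduct.tensorTensorTensorComm k L L M (H ⊗[k] M)).toLinearMap ∘ₗ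
      ((TensorProduct.assoc k M H M).toLinearMap.lTensor (L ⊗[k] L))).lTensor V ∘ₗ
    (TensorProduct.assoc k V (L ⊗[k] L) ((M ⊗[k] H) ⊗[k] M)).toLinearMap ∘ₗ
    (TensorProduct.assoc k V L L).toLinearMap.rTensor ((M ⊗[k] H) ⊗[k] M)

lemma auxG_tmul {L M H V : Type*} {k : Type*} [Field k]
    [AddCommGroup L] [Module k L] [AddCommGroup M] [Module k M]
    [AddCommGroup H] [Module k H] [AddCommGroup V] [Module k V]
    (π : L ⊗[k] M →ₗ[k] V) (μL : L ⊗[k] H →ₗ[k] L)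
    (a : V) (ℓ₁ ℓ₂ : L) (m : M) (h : H) (n : M) :
    auxG π μL (((a ⊗ₜ[k] ℓ₁) ⊗ₜ[k] ℓ₂) ⊗ₜ[k] ((m ⊗ₜ[k] h) ⊗ₜ[k] n)) =
      a ⊗ₜ[k] (π (ℓ₁ ⊗ₜ[k] m) ⊗ₜ[k] π (μL (ℓ₂ ⊗ₜ[k] h) ⊗ₜ[k] n)) := by
  simp [auxG]

/-- Given a Hopf `H`-module `M`, a right `H`-module coalgebra `L`, a right
`L`-comodule `V` and a compatible pairing `π : L ⊗ M → V`, the map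
`F_V = (id ⊗ π) ∘ (Δ_V ⊗ id)` satisfies, together with `Φ_M`, the modified pentagon equation. -/
theorem stmt11 {H M L V : Type} [Ring H] [HopfAlgebra k H]
    [AddCommGroup M] [Module k M] [AddCommGroup L] [Module k L] [AddCommGroup V] [Module k V]
    -- a Hopf `H`-module structure on `M`
    (μ : H ⊗[k] M →ₗ[k] M) (δ : M →ₗ[k] M ⊗[k] H) (hM : IsHopfModule k μ δ)
    -- a coassociative comultiplication on `L`
    (ΔL : L →ₗ[k] L ⊗[k] L)
    (hLcoassoc : ΔL.rTensor L ∘ₗ ΔL =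
      (TensorProduct.assoc k L L L).symm.toLinearMap ∘ₗ ΔL.lTensor L ∘ₗ ΔL)
    -- a right `H`-module structure on `L`
    (μL : L ⊗[k] H →ₗ[k] L)
    (hLunit : ∀ ℓ : L, μL (ℓ ⊗ₜ[k] (1 : H)) = ℓ)
    (hLassoc : ∀ (ℓ : L) (g h : H), μL (μL (ℓ ⊗ₜ[k] g) ⊗ₜ[k] h) = μL (ℓ ⊗ₜ[k] (g * h)))
    -- module coalgebra axiom: `Δ_L(ℓ·h) = Σ ℓ₍₁₎·h₍₁₎ ⊗ ℓ₍₂₎·h₍₂₎`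
    (hLmodcoalg : ΔL ∘ₗ μL =
      TensorProduct.map μL μL ∘ₗ (TensorProduct.tensorTensorTensorComm k L L H H).toLinearMap ∘ₗ
        TensorProduct.map ΔL (Coalgebra.comul (R := k) (A := H)))
    -- a coassociative right `L`-comodule structure on `V`
    (ΔV : V →ₗ[k] V ⊗[k] L)
    (hVcoassoc : ΔV.rTensor L ∘ₗ ΔV =
      (TensorProduct.assoc k V L L).symm.toLinearMap ∘ₗ ΔL.lTensor V ∘ₗ ΔV)
    -- the pairing `π : L ⊗ M → V` with `π(ℓ·h ⊗ m) = π(ℓ ⊗ h·m)`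
    (π : L ⊗[k] M →ₗ[k] V)
    (hπ1 : π ∘ₗ μL.rTensor M = π ∘ₗ μ.lTensor L ∘ₗ (TensorProduct.assoc k L H M).toLinearMap)
    -- and `Δ_V(π(ℓ ⊗ m)) = Σ π(ℓ₍₁₎ ⊗ m₍₀₎) ⊗ ℓ₍₂₎·m₍₁₎`
    (hπ2 : ΔV ∘ₗ π =
      TensorProduct.map π μL ∘ₗ (TensorProduct.tensorTensorTensorComm k L L M H).toLinearMap ∘ₗ
        TensorProduct.map ΔL δ) :
    MPE (π.lTensor V ∘ₗ (TensorProduct.assoc k V L M).toLinearMap ∘ₗ ΔV.rTensor M)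
      (hopfPhi k μ δ) := by
  have hπ1' : ∀ (ℓ : L) (h : H) (m : M),
      π (μL (ℓ ⊗ₜ[k] h) ⊗ₜ[k] m) = π (ℓ ⊗ₜ[k] μ (h ⊗ₜ[k] m)) := by
    intro ℓ h m
    simpa using LinearMap.congr_fun hπ1 ((ℓ ⊗ₜ[k] h) ⊗ₜ[k] m)
  have hπ2' : ∀ (ℓ : L) (m : M),
      ΔV (π (ℓ ⊗ₜ[k] m)) = TensorProduct.map π μL
        ((TensorProduct.tensorTensorTensorComm k L L M H) (ΔL ℓ ⊗ₜ[k] δ m)) := by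
    intro ℓ m
    simpa using LinearMap.congr_fun hπ2 (ℓ ⊗ₜ[k] m)
  have hVco' : ∀ v : V,
      ΔV.rTensor L (ΔV v) = (TensorProduct.assoc k V L L).symm (ΔL.lTensor V (ΔV v)) := by
    intro v
    simpa using LinearMap.congr_fun hVcoassoc v
  set F : V ⊗[k] M →ₗ[k] V ⊗[k] V :=
    π.lTensor V ∘ₗ (TensorProduct.assoc k V L M).toLinearMap ∘ₗ ΔV.rTensor M with hF
  have claim1 : ∀ (v : V) (m n : M),
      m12 F (m13 F (m23 (hopfPhi k μ δ) (v ⊗ₜ[k] (m ⊗ₜ[k] n)))) =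
        auxG π μL ((ΔV.rTensor L (ΔV v)) ⊗ₜ[k] ((δ m) ⊗ₜ[k] n)) := by
    intro v m n
    simp only [m23, hopfPhi, LinearMap.comp_apply, LinearMap.lTensor_tmul,
      LinearMap.rTensor_tmul, LinearEquiv.coe_coe, assoc_tmul]
    generalize δ m = B
    induction B using TensorProduct.induction_on with
    | zero => simp
    | add x y hx hy => simp only [add_tmul, tmul_add, map_add, hx, hy]
    | tmul m' h =>
      simp only [assoc_tmul, LinearMap.lTensor_tmul, m13, m12, LinearMap.comp_apply,
        LinearEquiv.coe_coe, comm_tmul, assoc_symm_tmul, LinearMap.rTensor_tmul, hF]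
      generalize ΔV v = A
      induction A using TensorProduct.induction_on with
      | zero => simp
      | add x y hx hy => simp only [add_tmul, tmul_add, map_add, hx, hy]
      | tmul a ℓ =>
        simp only [assoc_tmul, LinearMap.lTensor_tmul, comm_tmul, assoc_symm_tmul,
          LinearMap.rTensor_tmul, LinearMap.comp_apply, LinearEquiv.coe_coe]
        generalize ΔV a = A2
        induction A2 using TensorProduct.induction_on with
        | zero => simp
        | add x y hx hy => simp only [add_tmul, tmul_add, map_add, hx, hy]
        | tmul a' ℓ' =>
          simp only [assoc_tmul, LinearMap.lTensor_tmul, auxG_tmul]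
          rw [hπ1']
  have claim2 : ∀ (v : V) (m n : M),
      m23 F (m12 F (v ⊗ₜ[k] (m ⊗ₜ[k] n))) =
        auxG π μL
          ((TensorProduct.assoc k V L L).symm ((ΔL.lTensor V) (ΔV v)) ⊗ₜ[k] ((δ m) ⊗ₜ[k] n)) := by
    intro v m n
    simp only [m12, m23, LinearMap.comp_apply, LinearEquiv.coe_coe, assoc_symm_tmul,
      LinearMap.rTensor_tmul, hF]
    generalize ΔV v = A
    induction A using TensorProduct.induction_on with
    | zero => simp
    | add x y hx hy => simp only [add_tmul, tmul_add, map_add, hx, hy]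
    | tmul a ℓ =>
      simp only [assoc_tmul, LinearMap.lTensor_tmul, LinearMap.rTensor_tmul,
        LinearMap.comp_apply, LinearEquiv.coe_coe]
      rw [hπ2']
      generalize ΔL ℓ = C
      generalize δ m = B
      induction C using TensorProduct.induction_on with
      | zero => simp
      | add x y hx hy => simp only [add_tmul, tmul_add, map_add, hx, hy]
      | tmul ℓ₁ ℓ₂ =>
        induction B using TensorProduct.induction_on with
        | zero => simp
        | add x y hx hy => simp only [add_tmul, tmul_add, map_add, hx, hy]
        | tmul m' h =>
          simp only [tensorTensorTensorComm_tmul, map_tmul, assoc_tmul, assoc_symm_tmul,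
            LinearMap.lTensor_tmul, LinearMap.comp_apply, LinearEquiv.coe_coe, auxG_tmul]
  rw [MPE]
  apply TensorProduct.ext'
  intro v b
  induction b using TensorProduct.induction_on with
  | zero => simp
  | add x y hx hy => simp only [tmul_add, map_add, hx, hy]
  | tmul m n =>
    simp only [LinearMap.comp_apply]
    rw [claim1, claim2, hVco']


end
end

section
/- Let H be a Hopf algebra over a field k with comultiplication Δ_H (Sweedler notation Δ_H(h) = Σ h₍₁₎ ⊗ h₍₂₎). Let L be a k-vector space with a coassociative comultiplication Δ_L : L → L ⊗ L (Sweedler notation Δ_L(ℓ) = Σ ℓ₍₁₎ ⊗ ℓ₍₂₎) and a right H-module structure (ℓ, h) ↦ ℓ·h satisfying Δ_L(ℓ·h) = Σ ℓ₍₁₎·h₍₁₎ ⊗ ℓ₍₂₎·h₍₂₎ (right H-module coalgebra). Define F_L : L ⊗ H → L ⊗ L by F_L(ℓ ⊗ h) = Σ ℓ₍₁₎ ⊗ ℓ₍₂₎·h, and suppose F_L is bijective (L is Galois). Define Φ_H : H ⊗ H → H ⊗ H by Φ_H(h ⊗ g) = Σ h₍₁₎ ⊗ h₍₂₎ g. Then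 the pair (F_L, Φ_H) satisfies the modified pentagon equation: (F_L)_{12} ∘ (F_L)_{13} ∘ (Φ_H)_{23} = (F_L)_{23} ∘ (F_L)_{12} as maps L ⊗ H ⊗ H → L ⊗ L ⊗ L. -/
open TensorProduct

noncomputable section

variable {k : Type*} [Field k]

/-- For a Galois right `H`-module coalgebra `L`, the pair
`(F_L, Φ_H)`, `F_L(ℓ ⊗ h) = Σ ℓ₍₁₎ ⊗ ℓ₍₂₎·h`, `Φ_H(h ⊗ g) = Σ h₍₁₎ ⊗ h₍₂₎ g`,
satisfies the modified pentagon equation. -/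
theorem stmt12 {H L : Type} [Ring H] [HopfAlgebra k H] [AddCommGroup L] [Module k L]
    -- a coassociative comultiplication on `L`
    (ΔL : L →ₗ[k] L ⊗[k] L)
    (hcoassoc : ΔL.rTensor L ∘ₗ ΔL =
      (TensorProduct.assoc k L L L).symm.toLinearMap ∘ₗ ΔL.lTensor L ∘ₗ ΔL)
    -- a right `H`-module structure on `L`
    (μL : L ⊗[k] H →ₗ[k] L)
    (hunit : ∀ ℓ : L, μL (ℓ ⊗ₜ[k] (1 : H)) = ℓ)
    (hassoc : ∀ (ℓ : L) (g h : H), μL (μL (ℓ ⊗ₜ[k] g) ⊗ₜ[k] h) = μL (ℓ ⊗ₜ[k] (g * h)))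
    -- module coalgebra axiom: `Δ_L(ℓ·h) = Σ ℓ₍₁₎·h₍₁₎ ⊗ ℓ₍₂₎·h₍₂₎`
    (hmodcoalg : ΔL ∘ₗ μL =
      TensorProduct.map μL μL ∘ₗ (TensorProduct.tensorTensorTensorComm k L L H H).toLinearMap ∘ₗ
        TensorProduct.map ΔL (Coalgebra.comul (R := k) (A := H)))
    -- the Galois map `F_L(ℓ ⊗ h) = Σ ℓ₍₁₎ ⊗ ℓ₍₂₎·h` and its bijectivity (Galois condition)
    (FL : L ⊗[k] H →ₗ[k] L ⊗[k] L)
    (hFL : FL = μL.lTensor L ∘ₗ (TensorProduct.assoc k L L H).toLinearMap ∘ₗ ΔL.rTensor H)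
    (hGalois : Function.Bijective FL) :
    MPE FL
      ((LinearMap.mul' k H).lTensor H ∘ₗ (TensorProduct.assoc k H H H).toLinearMap ∘ₗ
        (Coalgebra.comul (R := k) (A := H)).rTensor H) := by

  subst hFL
  -- the right action as a family of endomorphisms of `L`
  set r : H → (L →ₗ[k] L) := fun x => μL ∘ₗ (TensorProduct.mk k L H).flip x with hrdef
  have hrapp : ∀ (x : H) (v : L), r x v = μL (v ⊗ₜ[k] x) := fun _ _ => rfl
  -- helper 1
  have lem1 : ∀ (z : L ⊗[k] L) (w : L) (x y : H),
      (TensorProduct.assoc k L L L)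
        (((μL.lTensor L) ((TensorProduct.assoc k L L H) (z ⊗ₜ[k] x))) ⊗ₜ[k] μL (w ⊗ₜ[k] y))
      = TensorProduct.map LinearMap.id (TensorProduct.map (r x) (r y))
          ((TensorProduct.assoc k L L L) (z ⊗ₜ[k] w)) := by
    intro z w x y
    induction z using TensorProduct.induction_on with
    | zero => simp
    | tmul u v => simp [hrapp]
    | add a b ha hb => simp [add_tmul, ha, hb]
  -- helper 2
  have lem2 : ∀ (z : L ⊗[k] L) (x y g : H),
      (μL.lTensor L) ((TensorProduct.assoc k L L H)
        ((TensorProduct.map μL μL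
          ((TensorProduct.tensorTensorTensorComm k L L H H) (z ⊗ₜ[k] (x ⊗ₜ[k] y)))) ⊗ₜ[k] g))
      = TensorProduct.map (r x) (r (y*g)) z := by
    intro z x y g
    induction z using TensorProduct.induction_on with
    | zero => simp
    | tmul u v => simp [hrapp, hassoc]
    | add a b ha hb => simp [add_tmul, ha, hb]
  unfold MPE
  ext ℓ h g
  obtain ⟨S, hS⟩ := TensorProduct.exists_finset (ΔL ℓ)
  obtain ⟨T, hT⟩ := TensorProduct.exists_finset (Coalgebra.comul (R := k) (A := H) h)
  simp only [m12, m13, m23, LinearMap.coe_comp, Function.comp_apply, LinearEquiv.coe_coe,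
    LinearMap.lTensor_tmul, LinearMap.rTensor_tmul, TensorProduct.assoc_tmul,
    TensorProduct.assoc_symm_tmul, TensorProduct.comm_tmul, LinearMap.mul'_apply,
    TensorProduct.AlgebraTensorModule.curry_apply, TensorProduct.curry_apply,
    LinearMap.coe_restrictScalars]
  rw [hS, hT]
  simp only [LinearMap.coe_comp, Function.comp_apply, LinearEquiv.coe_coe,
    LinearMap.lTensor_tmul, LinearMap.rTensor_tmul, TensorProduct.assoc_tmul,
    TensorProduct.assoc_symm_tmul, TensorProduct.comm_tmul, LinearMap.mul'_apply,
    hS, hT, TensorProduct.sum_tmul, TensorProduct.tmul_sum, map_sum]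
  have hco := DFunLike.congr_fun hcoassoc ℓ
  simp only [LinearMap.coe_comp, Function.comp_apply, LinearEquiv.coe_coe] at hco
  have e1 : ∑ i ∈ S, (TensorProduct.assoc k L L L) (ΔL i.1 ⊗ₜ[k] i.2)
      = (TensorProduct.assoc k L L L) ((ΔL.rTensor L) (ΔL ℓ)) := by
    rw [hS, map_sum, map_sum]
    simp only [LinearMap.rTensor_tmul]
  have e2 : (ΔL.lTensor L) (ΔL ℓ) = ∑ i ∈ S, i.1 ⊗ₜ[k] ΔL i.2 := by
    rw [hS, map_sum]
    simp only [LinearMap.lTensor_tmul]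
  have key1 : ∑ i ∈ S, (TensorProduct.assoc k L L L) (ΔL i.1 ⊗ₜ[k] i.2)
      = ∑ i ∈ S, i.1 ⊗ₜ[k] ΔL i.2 := by
    rw [e1, hco, LinearEquiv.apply_symm_apply, e2]
  have key2 : ∀ b : L,
      ∑ p ∈ T, (TensorProduct.map (r p.1) (r (p.2 * g))) (ΔL b)
      = (μL.lTensor L) ((TensorProduct.assoc k L L H) (ΔL (μL (b ⊗ₜ[k] h)) ⊗ₜ[k] g)) := by
    intro b
    have hm := DFunLike.congr_fun hmodcoalg (b ⊗ₜ[k] h)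
    simp only [LinearMap.coe_comp, Function.comp_apply, TensorProduct.map_tmul,
      LinearEquiv.coe_coe] at hm
    rw [hm, hT]
    simp only [TensorProduct.tmul_sum, map_sum, TensorProduct.sum_tmul, lem2]
  simp only [lem1]
  calc ∑ x ∈ T, ∑ x1 ∈ S,
        (TensorProduct.map LinearMap.id (TensorProduct.map (r x.1) (r (x.2 * g))))
          ((TensorProduct.assoc k L L L) (ΔL x1.1 ⊗ₜ[k] x1.2))
      = ∑ x ∈ T, ∑ x1 ∈ S,
        (TensorProduct.map LinearMap.id (TensorProduct.map (r x.1) (r (x.2 * g))))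
          (x1.1 ⊗ₜ[k] ΔL x1.2) := by
        refine Finset.sum_congr rfl fun x _ => ?_
        rw [← map_sum, key1, map_sum]
    _ = ∑ x1 ∈ S, x1.1 ⊗ₜ[k] ∑ x ∈ T, (TensorProduct.map (r x.1) (r (x.2 * g))) (ΔL x1.2) := by
        rw [Finset.sum_comm]
        simp only [TensorProduct.map_tmul, LinearMap.id_coe, id_eq, TensorProduct.tmul_sum]
    _ = ∑ x ∈ S, x.1 ⊗ₜ[k] (μL.lTensor L) ((TensorProduct.assoc k L L H) (ΔL (μL (x.2 ⊗ₜ[k] h)) ⊗ₜ[k] g)) := by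
        refine Finset.sum_congr rfl fun x _ => ?_
        rw [key2]


end
end

section
/- Let k be a field and V, M k-vector spaces. Suppose (F, Φ) satisfies the modified pentagon equation and Φ additionally satisfies the pentagon equation. Then for every k-linear map x : M → V, F_{12} ∘ F_{13} ∘ (x ⊗ id_M ⊗ id_M) ∘ Φ_{13}⁻¹ ∘ Φ_{12}⁻¹ = F_{23} ∘ F_{12} ∘ (x ⊗ id_M ⊗ id_M) ∘ Φ_{12}⁻¹ ∘ Φ_{23}⁻¹ as linear maps M ⊗ M ⊗ M → V ⊗ V ⊗ V; that is, the comultiplication Δ_{F,Φ}(x) = F ∘ (x ⊗ id_M) ∘ Φ⁻¹ on Hom(M, V) is coassociative. -/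
open TensorProduct

noncomputable section

variable {k : Type*} [Field k]

section Aux

variable {A B C P Q R : Type*}
  [AddCommGroup A] [AddCommGroup B] [AddCommGroup C]
  [AddCommGroup P] [AddCommGroup Q] [AddCommGroup R]
  [Module k A] [Module k B] [Module k C] [Module k P] [Module k Q] [Module k R]

lemma m12_cancel (E : A ⊗[k] B ≃ₗ[k] P ⊗[k] Q) :
    m12 (C := C) E.symm.toLinearMap ∘ₗ m12 E.toLinearMap = LinearMap.id := by
  ext t
  simp [m12, ← LinearMap.rTensor_comp_apply]

lemma m23_cancel (E : B ⊗[k] C ≃ₗ[k] Q ⊗[k] R) :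
    m23 (A := A) E.symm.toLinearMap ∘ₗ m23 E.toLinearMap = LinearMap.id := by
  ext t
  simp [m23, ← LinearMap.lTensor_comp_apply]

lemma comm_comm :
    (TensorProduct.comm k B C ≪≫ₗ TensorProduct.comm k C B) = LinearEquiv.refl k (B ⊗[k] C) := by
  apply LinearEquiv.toLinearMap_injective
  apply TensorProduct.ext'
  intro b c
  simp

lemma m13_cancel (E : A ⊗[k] C ≃ₗ[k] P ⊗[k] R) :
    m13 (B := B) E.symm.toLinearMap ∘ₗ m13 E.toLinearMap = LinearMap.id := by
  ext t
  simp [m13, ← LinearMap.rTensor_comp_apply, ← LinearMap.lTensor_comp_apply, comm_comm]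

/-- `m12` of an equivalence, as an equivalence. -/
def e12 (E : A ⊗[k] B ≃ₗ[k] P ⊗[k] Q) : A ⊗[k] (B ⊗[k] C) ≃ₗ[k] P ⊗[k] (Q ⊗[k] C) :=
  LinearEquiv.ofLinear (m12 E.toLinearMap) (m12 E.symm.toLinearMap)
    (by have := m12_cancel (C := C) E.symm; simpa using this) (m12_cancel E)

/-- `m23` of an equivalence, as an equivalence. -/
def e23 (E : B ⊗[k] C ≃ₗ[k] Q ⊗[k] R) : A ⊗[k] (B ⊗[k] C) ≃ₗ[k] A ⊗[k] (Q ⊗[k] R) :=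
  LinearEquiv.ofLinear (m23 E.toLinearMap) (m23 E.symm.toLinearMap)
    (by have := m23_cancel (A := A) E.symm; simpa using this) (m23_cancel E)

/-- `m13` of an equivalence, as an equivalence. -/
def e13 (E : A ⊗[k] C ≃ₗ[k] P ⊗[k] R) : A ⊗[k] (B ⊗[k] C) ≃ₗ[k] P ⊗[k] (B ⊗[k] R) :=
  LinearEquiv.ofLinear (m13 E.toLinearMap) (m13 E.symm.toLinearMap)
    (by have := m13_cancel (B := B) E.symm; simpa using this) (m13_cancel E)

end Aux

/-- The inverse form of the pentagon equation:
`Φ₂₃⁻¹ ∘ Φ₁₃⁻¹ ∘ Φ₁₂⁻¹ = Φ₁₂⁻¹ ∘ Φ₂₃⁻¹`. -/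
lemma pe_inv {M : Type} [AddCommGroup M] [Module k M]
    (Φ : M ⊗[k] M ≃ₗ[k] M ⊗[k] M) (hPE : PE Φ.toLinearMap) :
    m23 Φ.symm.toLinearMap ∘ₗ m13 Φ.symm.toLinearMap ∘ₗ m12 Φ.symm.toLinearMap =
      m12 Φ.symm.toLinearMap ∘ₗ m23 Φ.symm.toLinearMap := by
  set a : M ⊗[k] (M ⊗[k] M) ≃ₗ[k] M ⊗[k] (M ⊗[k] M) := e12 Φ with ha
  set b : M ⊗[k] (M ⊗[k] M) ≃ₗ[k] M ⊗[k] (M ⊗[k] M) := e13 Φ with hb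
  set c : M ⊗[k] (M ⊗[k] M) ≃ₗ[k] M ⊗[k] (M ⊗[k] M) := e23 Φ with hc
  have hPE' : a * (b * c) = c * a := LinearEquiv.toLinearMap_injective hPE
  have key : c⁻¹ * (b⁻¹ * a⁻¹) = a⁻¹ * c⁻¹ := by
    rw [← mul_inv_rev, ← mul_inv_rev, mul_assoc, hPE', mul_inv_rev]
  exact congrArg LinearEquiv.toLinearMap key

/-- If `(F, Φ)` satisfies the modified pentagon equation and `Φ` satisfies the
pentagon equation, then the comultiplication `Δ_{F,Φ}(x) = F ∘ (x ⊗ id_M) ∘ Φ⁻¹` on `Hom(M, V)`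
is coassociative. -/
theorem stmt18 {V M : Type}
    [AddCommGroup V] [Module k V] [AddCommGroup M] [Module k M]
    (F : V ⊗[k] M ≃ₗ[k] V ⊗[k] V) (Φ : M ⊗[k] M ≃ₗ[k] M ⊗[k] M)
    (hMPE : MPE F.toLinearMap Φ.toLinearMap) (hPE : PE Φ.toLinearMap)
    (x : M →ₗ[k] V) :
    m12 F.toLinearMap ∘ₗ m13 F.toLinearMap ∘ₗ x.rTensor (M ⊗[k] M) ∘ₗ
        m13 Φ.symm.toLinearMap ∘ₗ m12 Φ.symm.toLinearMap =
      m23 F.toLinearMap ∘ₗ m12 F.toLinearMap ∘ₗ x.rTensor (M ⊗[k] M) ∘ₗ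
        m12 Φ.symm.toLinearMap ∘ₗ m23 Φ.symm.toLinearMap := by
  -- abbreviations
  have hcanV : m23 (A := V) Φ.toLinearMap ∘ₗ m23 Φ.symm.toLinearMap = LinearMap.id := by
    simpa using m23_cancel (A := V) Φ.symm
  -- applied version of the modified pentagon equation, with `Φ₂₃` moved to the other side
  have hA : ∀ u : V ⊗[k] (M ⊗[k] M),
      m12 F.toLinearMap (m13 F.toLinearMap u) =
        m23 F.toLinearMap (m12 F.toLinearMap (m23 Φ.symm.toLinearMap u)) := by
    intro u
    have h := LinearMap.congr_fun hMPE (m23 Φ.symm.toLinearMap u)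
    have h2 := LinearMap.congr_fun hcanV u
    simp only [LinearMap.comp_apply, LinearMap.id_apply] at h h2
    rw [h2] at h
    exact h
  -- `Φ₂₃⁻¹` commutes with `x ⊗ id ⊗ id`
  have hB : m23 (A := V) Φ.symm.toLinearMap ∘ₗ x.rTensor (M ⊗[k] M) =
      x.rTensor (M ⊗[k] M) ∘ₗ m23 (A := M) Φ.symm.toLinearMap := by
    show LinearMap.lTensor V Φ.symm.toLinearMap ∘ₗ x.rTensor (M ⊗[k] M) =
      x.rTensor (M ⊗[k] M) ∘ₗ LinearMap.lTensor M Φ.symm.toLinearMap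
    rw [LinearMap.lTensor_comp_rTensor, LinearMap.rTensor_comp_lTensor]
  have hBap := LinearMap.congr_fun hB
  have hCap := LinearMap.congr_fun (pe_inv Φ hPE)
  simp only [LinearMap.comp_apply] at hBap hCap
  apply LinearMap.ext
  intro t
  simp only [LinearMap.comp_apply]
  rw [hA, hBap, hCap]


end
end
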